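/- arXiv:0902.4838 — 4 statements merged into one kernel-verified Lean document; each statement's English description precedes it below -/
import Mathlib

section
/- For every f ∈ L²([0,1]) and every γ ≥ 0, the continuous Potts functional H_γ^∞(·, f) attains its minimum on L²([0,1]); that is, the set argmin H_γ^∞(·, f) is nonempty. -/
open MeasureTheory Filter Set ProbabilityTheory
open scoped Classical ENNReal NNReal

noncomputable section

/-- Lebesgue measure restricted to `[0,1)`. -/
def mu01 : Measure ℝ := volume.restrict (Set.Ico (0:ℝ) 1)

/-- `L²([0,1])` distance between two (represenatives of) elements of `L²([0,1])`. -/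
def L2d (f g : ℝ → ℝ) : ℝ := Real.sqrt (∫ x in Set.Ico (0:ℝ) 1, (f x - g x)^2)

/-- `S([0,1])`: right-continuous step functions on `[0,1)`. -/
def IsStepFn (g : ℝ → ℝ) : Prop :=
  ∃ (m : ℕ) (t : Fin (m+2) → ℝ) (a : Fin (m+1) → ℝ),
    StrictMono t ∧ t 0 = 0 ∧ t (Fin.last (m+1)) = 1 ∧
    ∀ i : Fin (m+1), ∀ x : ℝ, t i.castSucc ≤ x → x < t i.succ → g x = a i

/-- The set of jumps `J(g)` of `g`, i.e. points of `(0,1)` where `g` is discontinuous. -/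
def jumpSet (g : ℝ → ℝ) : Set ℝ := {t | t ∈ Set.Ioo (0:ℝ) 1 ∧ ¬ ContinuousAt g t}

/-- The continuous Potts functional `H_γ^∞(g, f)` for `γ > 0`:
`γ⋅#J(g) + ‖f − g‖²` for step functions `g`, `∞` otherwise. -/
def HinfP (γ : ℝ) (g f : ℝ → ℝ) : ℝ≥0∞ :=
  if IsStepFn g then ENNReal.ofReal (γ * (jumpSet g).ncard + (L2d f g)^2) else ⊤

/-- The continuous Potts functional `H_γ^∞(g, f)`, including the case `γ = 0`
where `H_0^∞(g, f) = ‖f − g‖²` for all `g`. -/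
def Hinf (γ : ℝ) (g f : ℝ → ℝ) : ℝ≥0∞ :=
  if γ = 0 then ENNReal.ofReal ((L2d f g)^2) else HinfP γ g f

/-- Approximation error `Δ_k(f)` by step functions with at most `k` jumps. -/
def Delta (k : ℕ) (f : ℝ → ℝ) : ℝ :=
  sInf {d | ∃ g, IsStepFn g ∧ (jumpSet g).ncard ≤ k ∧ d = L2d g f}

/-- Membership in the approximation space `A^α` (the `L^∞` condition plus
`sup_{k ≥ 1} k^α Δ_k(f) < ∞`). -/
def MemApprox (α : ℝ) (f : ℝ → ℝ) : Prop :=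
  (∃ M, ∀ x ∈ Set.Ico (0:ℝ) 1, |f x| ≤ M) ∧
  ∃ C, ∀ k : ℕ, 1 ≤ k → (k:ℝ) ^ α * Delta k f ≤ C

/-- Number of jumps of the discrete vector `(u 0, …, u (n-1))`. -/
def dJ (n : ℕ) (u : ℕ → ℝ) : ℕ := {i | i + 1 < n ∧ u i ≠ u (i+1)}.ncard

/-- The discrete Potts functional `H_γ(u, y)`. -/
def Hd (n : ℕ) (γ : ℝ) (u y : ℕ → ℝ) : ℝ :=
  (1/(n:ℝ)) * ∑ i ∈ Finset.range n, (u i - y i)^2 + γ * dJ n u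

/-- The embedding `ι^n`: the vector `(u 0, …, u (n-1))` becomes the step function
taking the value `u i` on `[i/n, (i+1)/n)` (and `u (n-1)` at `1`). -/
def iota (n : ℕ) (u : ℕ → ℝ) : ℝ → ℝ := fun x => u (min (⌊(n:ℝ) * x⌋₊) (n-1))

/-- The mean value `f̄_{i+1}^n = n ∫_{i/n}^{(i+1)/n} f(u) du` (0-indexed). -/
def fbar (f : ℝ → ℝ) (n i : ℕ) : ℝ := n * ∫ x in ((i:ℝ)/n)..(((i:ℝ)+1)/n), f x

/-- The observations `Y_i^n = f̄_i^n + ξ_i^n` (0-indexed). -/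
def Yobs {Ω : Type*} (f : ℝ → ℝ) (ξ : ℕ → ℕ → Ω → ℝ) (n : ℕ) (ω : Ω) : ℕ → ℝ :=
  fun i => fbar f n i + ξ n i ω

/-- Condition (A): the triangular array is row-wise independent, measurable and
uniformly sub-Gaussian with constant `β`. -/
def CondA {Ω : Type*} [MeasurableSpace Ω] (P : Measure Ω) (ξ : ℕ → ℕ → Ω → ℝ) (β : ℝ) : Prop :=
  (∀ n i, Measurable (ξ n i)) ∧
  (∀ n, iIndepFun (fun i : Fin n => ξ n (i : ℕ)) P) ∧
  (∀ n i, i < n → ∀ ν : ℝ,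
    Integrable (fun ω => Real.exp (ν * ξ n i ω)) P ∧
    ∫ ω, Real.exp (ν * ξ n i ω) ∂P ≤ Real.exp (β * ν^2))

/-- `uhat n ω` minimizes `u ↦ H_{γ_n}(u, Y^n)` over `ℝ^n`. -/
def IsPottsMin {Ω : Type*} (f : ℝ → ℝ) (ξ : ℕ → ℕ → Ω → ℝ) (γ : ℕ → Ω → ℝ)
    (uhat : ℕ → Ω → ℕ → ℝ) : Prop :=
  ∀ n ω, ∀ v : ℕ → ℝ, Hd n (γ n ω) (uhat n ω) (Yobs f ξ n ω) ≤ Hd n (γ n ω) v (Yobs f ξ n ω)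

/-- Condition (H1): `γ_n → 0` and `n γ_n / log n → ∞` almost surely. -/
def CondH1 {Ω : Type*} [MeasurableSpace Ω] (P : Measure Ω) (γ : ℕ → Ω → ℝ) : Prop :=
  ∀ᵐ ω ∂P, Tendsto (fun n => γ n ω) atTop (nhds 0) ∧
    Tendsto (fun n : ℕ => (n:ℝ) * γ n ω / Real.log n) atTop atTop

/-- Condition (H2): `γ_n → 0` and `γ_n ≥ (1+δ)·12β·log n/n` eventually, a.s., for some `δ > 0`. -/
def CondH2 {Ω : Type*} [MeasurableSpace Ω] (P : Measure Ω) (γ : ℕ → Ω → ℝ) (β : ℝ) : Prop :=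
  ∃ δ : ℝ, 0 < δ ∧ ∀ᵐ ω ∂P, Tendsto (fun n => γ n ω) atTop (nhds 0) ∧
    ∀ᶠ n : ℕ in atTop, (1+δ) * 12 * β * Real.log n / n ≤ γ n ω

/-- Hausdorff distance of subsets of `(0,1)`, with the paper's convention for `∅`. -/
def rhoH (A B : Set ℝ) : ℝ :=
  if A = ∅ ∧ B = ∅ then 0 else if A = ∅ ∨ B = ∅ then 1 else Metric.hausdorffDist A B

/-- `Λ₁`: strictly increasing continuous bijections of `[0,1]` onto itself. -/
def Lambda1 (l : ℝ → ℝ) : Prop :=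
  ContinuousOn l (Set.Icc 0 1) ∧ StrictMonoOn l (Set.Icc 0 1) ∧
  l '' Set.Icc 0 1 = Set.Icc 0 1

/-- The Skorokhod metric `ρ_S(g,h)`, as the infimum of all `r ≥ 0` such that some
time change `λ ∈ Λ₁` achieves `max(L(λ), sup_t |g(λ(t)) − h(t)|) ≤ r`. -/
def rhoS (g h : ℝ → ℝ) : ℝ :=
  sInf {r : ℝ | 0 ≤ r ∧ ∃ l : ℝ → ℝ, Lambda1 l ∧
    (∀ s ∈ Set.Icc (0:ℝ) 1, ∀ t ∈ Set.Icc (0:ℝ) 1, s ≠ t →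
      |Real.log ((l t - l s) / (t - s))| ≤ r) ∧
    ∀ t ∈ Set.Icc (0:ℝ) 1, |g (l t) - h t| ≤ r}

/-- `C_n = sup_{1≤i≤j≤n} (ξ_i+⋯+ξ_j)²/((j−i+1) log n)` (0-indexed). -/
def Cn {Ω : Type*} (ξ : ℕ → ℕ → Ω → ℝ) (n : ℕ) (ω : Ω) : ℝ :=
  sSup {c | ∃ i j : ℕ, i ≤ j ∧ j < n ∧
    c = (∑ l ∈ Finset.Icc i j, ξ n l ω)^2 / (((j:ℝ) - i + 1) * Real.log n)}

/-- The multiresolution criterion (7) for the residuals `Y_i − u_i`. -/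
def MRcrit (δ σhat : ℝ) (n : ℕ) (Y u : ℕ → ℝ) : Prop :=
  ∀ a b : ℕ, a ≤ b → b < n →
    |∑ i ∈ Finset.Icc a b, (Y i - u i)| ≤
      (1+δ) * σhat * Real.sqrt (2 * Real.log n) * Real.sqrt ((b - a + 1 : ℕ))

end

noncomputable section

instance : IsFiniteMeasure mu01 := by
  constructor
  rw [mu01, Measure.restrict_apply_univ, Real.volume_Ico]
  norm_num

namespace PZ
def err (f : ℝ → ℝ) (a b : ℝ) : ℝ :=
  (∫ x in a..b, (f x)^2) - (∫ x in a..b, f x)^2 / (b - a)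

def E (f : ℝ → ℝ) (k : ℕ) (t : Fin (k+2) → ℝ) : ℝ :=
  ∑ i : Fin (k+1), err f (t i.castSucc) (t i.succ)

def T (k : ℕ) : Set (Fin (k+2) → ℝ) :=
  {t | Monotone t ∧ t 0 = 0 ∧ t (Fin.last (k+1)) = 1}

lemma T_mem_icc {k : ℕ} {t : Fin (k+2) → ℝ} (ht : t ∈ T k) (j : Fin (k+2)) :
    0 ≤ t j ∧ t j ≤ 1 := by
  obtain ⟨hm, h0, h1⟩ := ht
  exact ⟨h0 ▸ hm (Fin.zero_le j), h1 ▸ hm (Fin.le_last j)⟩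
lemma ii {φ : ℝ → ℝ} (hφ : IntegrableOn φ (Set.Ico (0:ℝ) 1)) {a b : ℝ}
    (h0 : 0 ≤ a) (hab : a ≤ b) (h1 : b ≤ 1) : IntervalIntegrable φ volume a b := by
  rw [intervalIntegrable_iff_integrableOn_Ioo_of_le hab]
  exact hφ.mono_set (fun x hx => ⟨h0.trans hx.1.le, lt_of_lt_of_le hx.2 h1⟩)

variable {f : ℝ → ℝ}

lemma expand (h1 : IntegrableOn f (Set.Ico (0:ℝ) 1))
    (h2 : IntegrableOn (fun x => (f x)^2) (Set.Ico (0:ℝ) 1)) {a b : ℝ} (ha : 0 ≤ a) (hab : a ≤ b) (hb : b ≤ 1) (c : ℝ) :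
    ∫ x in a..b, (f x - c)^2
      = (∫ x in a..b, (f x)^2) - 2*c*(∫ x in a..b, f x) + c^2*(b-a) := by
  have i1 : IntervalIntegrable f volume a b := ii h1 ha hab hb
  have i2 : IntervalIntegrable (fun x => (f x)^2) volume a b := ii h2 ha hab hb
  have e1 : (∫ x in a..b, (f x - c)^2)
      = ∫ x in a..b, ((f x)^2 - (2*c)*(f x) + c^2) :=
    intervalIntegral.integral_congr (fun x _ => by ring)
  rw [e1, intervalIntegral.integral_add (i2.sub (i1.const_mul (2*c)))
    intervalIntegrable_const, intervalIntegral.integral_sub i2 (i1.const_mul (2*c)),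
    intervalIntegral.integral_const_mul, intervalIntegral.integral_const,
    smul_eq_mul]
  ring

lemma err_eq (h1 : IntegrableOn f (Set.Ico (0:ℝ) 1))
    (h2 : IntegrableOn (fun x => (f x)^2) (Set.Ico (0:ℝ) 1)) {a b : ℝ} (ha : 0 ≤ a) (hab : a < b) (hb : b ≤ 1) :
    err f a b = ∫ x in a..b, (f x - (∫ x in a..b, f x)/(b-a))^2 := by
  rw [expand h1 h2 ha hab.le hb]
  have hL : b - a ≠ 0 := by linarith
  rw [err]; field_simp; ring

lemma err_nonneg (h1 : IntegrableOn f (Set.Ico (0:ℝ) 1))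
    (h2 : IntegrableOn (fun x => (f x)^2) (Set.Ico (0:ℝ) 1)) {a b : ℝ} (ha : 0 ≤ a) (hab : a ≤ b) (hb : b ≤ 1) :
    0 ≤ err f a b := by
  rcases eq_or_lt_of_le hab with rfl | hlt
  · simp [err]
  · rw [err_eq h1 h2 ha hlt hb]
    exact intervalIntegral.integral_nonneg hab (fun x _ => sq_nonneg _)

lemma err_le_sq (h1 : IntegrableOn f (Set.Ico (0:ℝ) 1))
    (h2 : IntegrableOn (fun x => (f x)^2) (Set.Ico (0:ℝ) 1)) {a b : ℝ} (ha : 0 ≤ a) (hab : a ≤ b) (hb : b ≤ 1) (c : ℝ) :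
    err f a b ≤ ∫ x in a..b, (f x - c)^2 := by
  rcases eq_or_lt_of_le hab with rfl | hlt
  · simp [err]
  · rw [expand h1 h2 ha hab hb c, err]
    set S := ∫ x in a..b, f x
    have hL : (0:ℝ) < b - a := by linarith
    have key : 2*c*S - c^2*(b-a) ≤ S^2/(b-a) := by
      rw [le_div_iff₀ hL]
      nlinarith [sq_nonneg (S - c*(b-a))]
    linarith
  
lemma err_le_S2 {a b : ℝ} (hab : a ≤ b) :
    err f a b ≤ ∫ x in a..b, (f x)^2 := by
  have : 0 ≤ (∫ x in a..b, f x)^2 / (b - a) :=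
    div_nonneg (sq_nonneg _) (by linarith)
  rw [err]; linarith

lemma sum_partition {ψ : ℝ → ℝ} (hψ : IntegrableOn ψ (Set.Ico (0:ℝ) 1))
    {k : ℕ} {t : Fin (k+2) → ℝ} (ht : t ∈ T k) :
    ∫ x in Set.Ico (0:ℝ) 1, ψ x
      = ∑ i : Fin (k+1), ∫ x in (t i.castSucc)..(t i.succ), ψ x := by
  set a : ℕ → ℝ := fun i => t ⟨min i (k+1), lt_of_le_of_lt (min_le_right _ _) (by omega)⟩ with ha
  have hbd : ∀ i : ℕ, 0 ≤ a i ∧ a i ≤ 1 := fun i => T_mem_icc ht _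
  have hmono : ∀ i j : ℕ, i ≤ j → a i ≤ a j := by
    intro i j hij
    exact ht.1 (by simp only [Fin.mk_le_mk]; omega)
  have hint : ∀ i : ℕ, i < k+1 → IntervalIntegrable ψ volume (a i) (a (i+1)) :=
    fun i _ => ii hψ (hbd i).1 (hmono i (i+1) (by omega)) (hbd (i+1)).2
  have hsum := intervalIntegral.sum_integral_adjacent_intervals hint
  have key : ∀ (i : ℕ) (j : Fin (k+2)), (j : ℕ) = i → a i = t j := by
    intro i j hj
    rw [ha]
    exact congrArg t (Fin.ext (by have := j.isLt; simp; omega))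
  have e0 : a 0 = 0 := by rw [key 0 0 rfl]; exact ht.2.1
  have e1 : a (k+1) = 1 := by rw [key (k+1) (Fin.last (k+1)) rfl]; exact ht.2.2
  have base : ∫ x in Set.Ico (0:ℝ) 1, ψ x = ∫ x in (0:ℝ)..1, ψ x := by
    rw [intervalIntegral.integral_of_le (by norm_num : (0:ℝ) ≤ 1),
      integral_Ioc_eq_integral_Ioo, integral_Ico_eq_integral_Ioo]
  rw [base, ← e0, ← e1, ← hsum, ← Fin.sum_univ_eq_sum_range
    (fun i => ∫ x in a i..a (i+1), ψ x) (k+1)]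
  apply Finset.sum_congr rfl
  intro i _
  rw [key i i.castSucc rfl, key (i+1) i.succ rfl]


lemma T_compact (k : ℕ) : IsCompact (T k) := by
  apply IsCompact.of_isClosed_subset (isCompact_univ_pi (fun _ => isCompact_Icc))
  · have hm : IsClosed {t : Fin (k+2) → ℝ | Monotone t} := by
      have : {t : Fin (k+2) → ℝ | Monotone t}
          = ⋂ (p : Fin (k+2) × Fin (k+2)) (_ : p.1 ≤ p.2), {t | t p.1 ≤ t p.2} := by
        ext t
        simp only [Set.mem_setOf_eq, Set.mem_iInter]
        exact ⟨fun h p hp => h hp, fun h i j hij => h (i, j) hij⟩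
      rw [this]
      exact isClosed_iInter (fun p => isClosed_iInter (fun _ =>
        isClosed_le (continuous_apply p.1) (continuous_apply p.2)))
    exact hm.inter ((isClosed_eq (continuous_apply 0) continuous_const).inter
      (isClosed_eq (continuous_apply (Fin.last (k+1))) continuous_const))
  · intro t ht j _
    exact T_mem_icc ht j

lemma T_nonempty (k : ℕ) : (T k).Nonempty := by
  refine ⟨fun j => if j = Fin.last (k+1) then (1:ℝ) else 0, ?_, ?_, ?_⟩
  · intro i j hij
    dsimp only
    by_cases hj : j = Fin.last (k+1)
    · subst hj; split <;> norm_num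
    · have hi : i ≠ Fin.last (k+1) := by
        rintro rfl; exact hj (le_antisymm (Fin.le_last j) hij)
      rw [if_neg hi, if_neg hj]
  · show (if (0:Fin (k+2)) = Fin.last (k+1) then (1:ℝ) else 0) = 0
    rw [if_neg (by simp [Fin.ext_iff])]
  · show (if Fin.last (k+1) = Fin.last (k+1) then (1:ℝ) else 0) = 1
    rw [if_pos rfl]

lemma err_self (a : ℝ) : err f a a = 0 := by simp [err]

lemma err_repr (h1 : IntegrableOn f (Set.Ico (0:ℝ) 1))
    (h2 : IntegrableOn (fun x => (f x)^2) (Set.Ico (0:ℝ) 1))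
    {a b : ℝ} (ha : 0 ≤ a) (hab : a ≤ b) (hb : b ≤ 1) :
    err f a b = ((∫ x in (0:ℝ)..b, (f x)^2) - (∫ x in (0:ℝ)..a, (f x)^2))
      - ((∫ x in (0:ℝ)..b, f x) - (∫ x in (0:ℝ)..a, f x))^2/(b - a) := by
  have hb0 : (0:ℝ) ≤ b := ha.trans hab
  have e2 : (∫ x in (0:ℝ)..b, (f x)^2) - (∫ x in (0:ℝ)..a, (f x)^2) = ∫ x in a..b, (f x)^2 :=
    intervalIntegral.integral_interval_sub_left (ii h2 le_rfl hb0 hb) (ii h2 le_rfl ha (by linarith))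
  have e1' : (∫ x in (0:ℝ)..b, f x) - (∫ x in (0:ℝ)..a, f x) = ∫ x in a..b, f x :=
    intervalIntegral.integral_interval_sub_left (ii h1 le_rfl hb0 hb) (ii h1 le_rfl ha (by linarith))
  rw [err, e2, e1']

lemma E_contOn (h1 : IntegrableOn f (Set.Ico (0:ℝ) 1))
    (h2 : IntegrableOn (fun x => (f x)^2) (Set.Ico (0:ℝ) 1)) (k : ℕ) :
    ContinuousOn (E f k) (T k) := by
  have hIcc1 : IntegrableOn f (Set.uIcc (0:ℝ) 1) := by
    rw [Set.uIcc_of_le (by norm_num : (0:ℝ) ≤ 1), integrableOn_Icc_iff_integrableOn_Ico]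
    exact h1
  have hIcc2 : IntegrableOn (fun x => (f x)^2) (Set.uIcc (0:ℝ) 1) := by
    rw [Set.uIcc_of_le (by norm_num : (0:ℝ) ≤ 1), integrableOn_Icc_iff_integrableOn_Ico]
    exact h2
  have hG : ContinuousOn (fun x => ∫ s in (0:ℝ)..x, f s) (Set.Icc 0 1) := by
    have := intervalIntegral.continuousOn_primitive_interval hIcc1
    rwa [Set.uIcc_of_le (by norm_num : (0:ℝ) ≤ 1)] at this
  have hG2 : ContinuousOn (fun x => ∫ s in (0:ℝ)..x, (f s)^2) (Set.Icc 0 1) := by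
    have := intervalIntegral.continuousOn_primitive_interval hIcc2
    rwa [Set.uIcc_of_le (by norm_num : (0:ℝ) ≤ 1)] at this
  apply continuousOn_finset_sum
  intro i _
  intro t₀ ht₀
  have hmaps : ∀ j : Fin (k+2), Set.MapsTo (fun t : Fin (k+2) → ℝ => t j) (T k) (Set.Icc 0 1) :=
    fun j t ht => T_mem_icc ht j
  have hA : ∀ (G : ℝ → ℝ), ContinuousOn G (Set.Icc 0 1) → ∀ j : Fin (k+2),
      ContinuousWithinAt (fun t : Fin (k+2) → ℝ => G (t j)) (T k) t₀ := by
    intro G hGc j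
    exact ContinuousWithinAt.comp (hGc _ (T_mem_icc ht₀ j))
      ((continuous_apply j).continuousWithinAt) (hmaps j)
  have hsub : ContinuousWithinAt (fun t : Fin (k+2) → ℝ =>
      t i.succ - t i.castSucc) (T k) t₀ :=
    ((continuous_apply i.succ).continuousWithinAt).sub
      ((continuous_apply i.castSucc).continuousWithinAt)
  have hG2d : ContinuousWithinAt (fun t : Fin (k+2) → ℝ =>
      (∫ s in (0:ℝ)..(t i.succ), (f s)^2) - (∫ s in (0:ℝ)..(t i.castSucc), (f s)^2)) (T k) t₀ :=
    (hA _ hG2 i.succ).sub (hA _ hG2 i.castSucc)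
  have hGd : ContinuousWithinAt (fun t : Fin (k+2) → ℝ =>
      (∫ s in (0:ℝ)..(t i.succ), f s) - (∫ s in (0:ℝ)..(t i.castSucc), f s)) (T k) t₀ :=
    (hA _ hG i.succ).sub (hA _ hG i.castSucc)
  have hbounds : ∀ t ∈ T k, 0 ≤ t i.castSucc ∧ t i.castSucc ≤ t i.succ ∧ t i.succ ≤ 1 :=
    fun t ht => ⟨(T_mem_icc ht i.castSucc).1, ht.1 (Fin.castSucc_le_succ i), (T_mem_icc ht i.succ).2⟩
  rcases eq_or_lt_of_le (hbounds t₀ ht₀).2.1 with heq | hlt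
  · -- degenerate: squeeze to 0
    have hval : err f (t₀ i.castSucc) (t₀ i.succ) = 0 := by rw [← heq, err_self]
    have hupper : Filter.Tendsto (fun t : Fin (k+2) → ℝ =>
        (∫ s in (0:ℝ)..(t i.succ), (f s)^2) - (∫ s in (0:ℝ)..(t i.castSucc), (f s)^2))
        (nhdsWithin t₀ (T k)) (nhds 0) := by
      have := hG2d
      rw [ContinuousWithinAt, ← heq, sub_self] at this
      exact this
    have : Filter.Tendsto (fun t : Fin (k+2) → ℝ => err f (t i.castSucc) (t i.succ))
        (nhdsWithin t₀ (T k)) (nhds 0) := by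
      apply tendsto_of_tendsto_of_tendsto_of_le_of_le' tendsto_const_nhds hupper
      · exact eventually_nhdsWithin_of_forall (fun t ht =>
          err_nonneg h1 h2 (hbounds t ht).1 (hbounds t ht).2.1 (hbounds t ht).2.2)
      · apply eventually_nhdsWithin_of_forall
        intro t ht
        have := err_le_S2 (f := f) (hbounds t ht).2.1
        rw [intervalIntegral.integral_interval_sub_left
          (ii h2 le_rfl ((hbounds t ht).1.trans (hbounds t ht).2.1) (hbounds t ht).2.2)
          (ii h2 le_rfl (hbounds t ht).1 ((hbounds t ht).2.1.trans (hbounds t ht).2.2))]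
        exact this
    rw [ContinuousWithinAt, hval]
    exact this
  · -- nondegenerate
    have hne : t₀ i.succ - t₀ i.castSucc ≠ 0 := by linarith
    have hcont : ContinuousWithinAt (fun t : Fin (k+2) → ℝ =>
        ((∫ s in (0:ℝ)..(t i.succ), (f s)^2) - (∫ s in (0:ℝ)..(t i.castSucc), (f s)^2))
        - ((∫ s in (0:ℝ)..(t i.succ), f s) - (∫ s in (0:ℝ)..(t i.castSucc), f s))^2
          / (t i.succ - t i.castSucc)) (T k) t₀ :=
      hG2d.sub (ContinuousWithinAt.div (hGd.pow 2) hsub hne)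
    apply hcont.congr
    · intro t ht
      exact err_repr h1 h2 (hbounds t ht).1 (hbounds t ht).2.1 (hbounds t ht).2.2
    · exact err_repr h1 h2 (hbounds t₀ ht₀).1 (hbounds t₀ ht₀).2.1 (hbounds t₀ ht₀).2.2


lemma cover_exists {k : ℕ} {t : Fin (k+2) → ℝ} (ht : t ∈ T k) {x : ℝ}
    (hx : x ∈ Set.Ico (0:ℝ) 1) :
    ∃ i : Fin (k+1), t i.castSucc ≤ x ∧ x < t i.succ := by
  classical
  set s : Finset (Fin (k+2)) := Finset.univ.filter (fun j => t j ≤ x) with hs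
  have hne : s.Nonempty := ⟨0, by simp [hs, ht.2.1, hx.1]⟩
  set j0 := s.max' hne with hj0
  have hj0mem : t j0 ≤ x := by
    have := s.max'_mem hne
    simp [hs] at this
    exact this
  have hj0ne : (j0 : ℕ) < k + 1 := by
    rcases lt_or_eq_of_le (Nat.lt_succ_iff.mp j0.isLt) with h | h
    · exact h
    · exfalso
      have : j0 = Fin.last (k+1) := Fin.ext h
      rw [this, ht.2.2] at hj0mem
      exact absurd hx.2 (not_lt.2 hj0mem)
  refine ⟨⟨j0, hj0ne⟩, ?_, ?_⟩
  · have : (⟨j0, hj0ne⟩ : Fin (k+1)).castSucc = j0 := Fin.ext rfl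
    rw [this]; exact hj0mem
  · by_contra hcon
    push_neg at hcon
    have hmem : (⟨j0, hj0ne⟩ : Fin (k+1)).succ ∈ s := by
      simp only [hs, Finset.mem_filter, Finset.mem_univ, true_and]
      exact hcon
    have hle := s.le_max' _ hmem
    rw [← hj0] at hle
    have : (j0:ℕ) + 1 ≤ (j0:ℕ) := hle
    omega

lemma cover_unique {k : ℕ} {t : Fin (k+2) → ℝ} (hm : Monotone t) {x : ℝ}
    {i i' : Fin (k+1)} (hi : t i.castSucc ≤ x ∧ x < t i.succ)
    (hi' : t i'.castSucc ≤ x ∧ x < t i'.succ) : i = i' := by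
  by_contra hne
  rcases lt_or_gt_of_ne hne with h | h
  · have : t i.succ ≤ t i'.castSucc := hm (show i.succ ≤ i'.castSucc by
      rw [Fin.le_def, Fin.val_succ, Fin.coe_castSucc]; exact h)
    linarith [hi.2, hi'.1]
  · have : t i'.succ ≤ t i.castSucc := hm (show i'.succ ≤ i.castSucc by
      rw [Fin.le_def, Fin.val_succ, Fin.coe_castSucc]; exact h)
    linarith [hi.1, hi'.2]

lemma enum_finset {F : Finset ℝ} {r : ℕ} (hcard : F.card = r + 2)
    (h0 : (0:ℝ) ∈ F) (h1 : (1:ℝ) ∈ F) (hsub : ∀ x ∈ F, 0 ≤ x ∧ x ≤ 1) :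
    ∃ s : Fin (r+2) → ℝ, StrictMono s ∧ s 0 = 0 ∧ s (Fin.last (r+1)) = 1 ∧
      (∀ j, s j ∈ F) ∧ (∀ x ∈ F, ∃ j, s j = x) := by
  set iso := F.orderIsoOfFin hcard with hiso
  refine ⟨fun j => (iso j : ℝ), ?_, ?_, ?_, fun j => (iso j).2, ?_⟩
  · intro p q hpq
    exact Subtype.coe_lt_coe.2 (iso.strictMono hpq)
  · apply le_antisymm
    · obtain ⟨j₀, hj₀⟩ : ∃ j, (iso j : ℝ) = 0 :=
        ⟨iso.symm ⟨0, h0⟩, by simp⟩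
      calc (iso 0 : ℝ) ≤ (iso j₀ : ℝ) :=
            Subtype.coe_le_coe.2 (iso.monotone (Fin.zero_le j₀))
        _ = 0 := hj₀
    · exact (hsub _ (iso 0).2).1
  · apply le_antisymm
    · exact (hsub _ (iso (Fin.last (r+1))).2).2
    · obtain ⟨j₁, hj₁⟩ : ∃ j, (iso j : ℝ) = 1 :=
        ⟨iso.symm ⟨1, h1⟩, by simp⟩
      calc (1:ℝ) = (iso j₁ : ℝ) := hj₁.symm
        _ ≤ (iso (Fin.last (r+1)) : ℝ) :=
            Subtype.coe_le_coe.2 (iso.monotone (Fin.le_last j₁))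
  · intro x hx
    exact ⟨iso.symm ⟨x, hx⟩, by simp⟩

lemma jumpSet_subset {g : ℝ → ℝ} {k : ℕ} {t : Fin (k+2) → ℝ} {a : Fin (k+1) → ℝ}
    (ht : t ∈ T k)
    (hval : ∀ i : Fin (k+1), ∀ x : ℝ, t i.castSucc ≤ x → x < t i.succ → g x = a i) :
    jumpSet g ⊆ t '' (Set.univ \ {0, Fin.last (k+1)}) := by
  intro x hx
  obtain ⟨hx01, hdisc⟩ := hx
  by_contra hcon
  apply hdisc
  obtain ⟨i, hi1, hi2⟩ := cover_exists ht ⟨hx01.1.le, hx01.2⟩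
  have hlt : t i.castSucc < x := by
    rcases lt_or_eq_of_le hi1 with h | h
    · exact h
    · exfalso
      apply hcon
      refine ⟨i.castSucc, ⟨Set.mem_univ _, ?_⟩, h⟩
      simp only [Set.mem_insert_iff, Set.mem_singleton_iff]
      rintro (h' | h')
      · rw [h'] at h; rw [← h, ht.2.1] at hx01; exact absurd hx01.1 (lt_irrefl 0)
      · exact absurd h' (Fin.castSucc_lt_last i).ne
  have hnbhd : ∀ y ∈ Set.Ioo (t i.castSucc) (t i.succ), g y = a i :=
    fun y hy => hval i y hy.1.le hy.2
  have hev : g =ᶠ[nhds x] (fun _ => a i) :=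
    Filter.eventuallyEq_of_mem (Ioo_mem_nhds hlt hi2) hnbhd
  exact hev.continuousAt


lemma step_const_on {g : ℝ → ℝ} (hg : IsStepFn g) {u v : ℝ} (huv : u < v)
    (hsub : Set.Ioo u v ⊆ Set.Ioo 0 1)
    (hnj : ∀ x ∈ Set.Ioo u v, x ∉ jumpSet g) :
    ∃ c, ∀ x ∈ Set.Ioo u v, g x = c := by
  obtain ⟨m, t, a, hsm, h0, h1, hval⟩ := hg
  have ht : t ∈ T m := ⟨hsm.monotone, h0, h1⟩
  have hcont : ContinuousOn g (Set.Ioo u v) := by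
    intro x hx
    have hx01 := hsub hx
    have hxnj := hnj x hx
    have hca : ContinuousAt g x := by
      by_contra hc; exact hxnj ⟨hx01, hc⟩
    exact hca.continuousWithinAt
  have hpre : IsPreconnected (g '' Set.Ioo u v) := isPreconnected_Ioo.image g hcont
  have hfin : (g '' Set.Ioo u v).Finite := by
    apply (Set.finite_range a).subset
    rintro y ⟨x, hx, rfl⟩
    obtain ⟨i, hi1, hi2⟩ := cover_exists ht ⟨(hsub hx).1.le, (hsub hx).2⟩
    exact ⟨i, (hval i x hi1 hi2).symm⟩
  have hss : (g '' Set.Ioo u v).Subsingleton := by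
    by_contra hns
    rw [Set.not_subsingleton_iff] at hns
    obtain ⟨c1, hc1, c2, hc2, hne⟩ := hns
    rcases hne.lt_or_gt with hlt | hlt
    · exact ((Set.Icc_infinite hlt).mono (hpre.ordConnected.out hc1 hc2)) hfin
    · exact ((Set.Icc_infinite hlt).mono (hpre.ordConnected.out hc2 hc1)) hfin
  have hw : (u+v)/2 ∈ Set.Ioo u v := ⟨by linarith, by linarith⟩
  exact ⟨g ((u+v)/2), fun x hx =>
    hss (Set.mem_image_of_mem g hx) (Set.mem_image_of_mem g hw)⟩

lemma memℒp_of_step {g : ℝ → ℝ} (hg : IsStepFn g) : MemLp g 2 mu01 := by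
  obtain ⟨m, t, a, hsm, h0, h1, hval⟩ := hg
  have ht : t ∈ T m := ⟨hsm.monotone, h0, h1⟩
  set G : ℝ → ℝ := fun x => ∑ i : Fin (m+1),
    Set.indicator (Set.Ico (t i.castSucc) (t i.succ)) (fun _ => a i) x with hG
  have hGm : MemLp G 2 mu01 :=
    memLp_finset_sum _ (fun i _ => MemLp.indicator measurableSet_Ico (memLp_const (a i)))
  have hpt : ∀ x ∈ Set.Ico (0:ℝ) 1, g x = G x := by
    intro x hx
    obtain ⟨i₀, hi₀⟩ := cover_exists ht hx
    rw [hG]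
    simp only
    rw [Finset.sum_eq_single i₀]
    · rw [Set.indicator_of_mem (Set.mem_Ico.2 ⟨hi₀.1, hi₀.2⟩)]
      exact hval i₀ x hi₀.1 hi₀.2
    · intro j _ hj
      apply Set.indicator_of_notMem
      intro hmem
      exact hj (cover_unique hsm.monotone ⟨hmem.1, hmem.2⟩ hi₀)
    · intro hcon; exact absurd (Finset.mem_univ i₀) hcon
  have hae : G =ᵐ[mu01] g := by
    have key : ∀ᵐ x ∂(volume.restrict (Set.Ico (0:ℝ) 1)), G x = g x := by
      rw [ae_restrict_iff' measurableSet_Ico]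
      exact Filter.Eventually.of_forall (fun x hx => (hpt x hx).symm)
    exact key
  exact hGm.ae_eq hae

def pieceVal (f : ℝ → ℝ) {k : ℕ} (t : Fin (k+2) → ℝ) (i : Fin (k+1)) : ℝ :=
  (∫ x in (t i.castSucc)..(t i.succ), f x) / (t i.succ - t i.castSucc)

def stepOf (f : ℝ → ℝ) {k : ℕ} (t : Fin (k+2) → ℝ) : ℝ → ℝ :=
  fun x => if h : ∃ i : Fin (k+1), t i.castSucc ≤ x ∧ x < t i.succ
    then pieceVal f t h.choose else 0

lemma stepOf_eq {f : ℝ → ℝ} {k : ℕ} {t : Fin (k+2) → ℝ} (hm : Monotone t) {x : ℝ}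
    {i : Fin (k+1)} (hi : t i.castSucc ≤ x ∧ x < t i.succ) :
    stepOf f t x = pieceVal f t i := by
  rw [stepOf, dif_pos ⟨i, hi⟩]
  exact congrArg _ (cover_unique hm (Exists.choose_spec (⟨i, hi⟩ :
    ∃ i : Fin (k+1), t i.castSucc ≤ x ∧ x < t i.succ)) hi)

lemma stepOf_hval {f : ℝ → ℝ} {k : ℕ} {t : Fin (k+2) → ℝ} (hm : Monotone t) :
    ∀ i : Fin (k+1), ∀ x : ℝ, t i.castSucc ≤ x → x < t i.succ →
      stepOf f t x = pieceVal f t i :=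
  fun i x hx1 hx2 => stepOf_eq hm ⟨hx1, hx2⟩

lemma stepOf_isStep (f : ℝ → ℝ) {k : ℕ} {t : Fin (k+2) → ℝ} (ht : t ∈ T k) :
    IsStepFn (stepOf f t) := by
  classical
  set F : Finset ℝ := Finset.image t Finset.univ with hF
  have h0F : (0:ℝ) ∈ F := by
    rw [hF]; exact ht.2.1 ▸ Finset.mem_image_of_mem t (Finset.mem_univ 0)
  have h1F : (1:ℝ) ∈ F := by
    rw [hF]; exact ht.2.2 ▸ Finset.mem_image_of_mem t (Finset.mem_univ _)
  have hsubF : ∀ x ∈ F, 0 ≤ x ∧ x ≤ 1 := by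
    intro x hx
    rw [hF, Finset.mem_image] at hx
    obtain ⟨j, _, rfl⟩ := hx
    exact T_mem_icc ht j
  have hcard2 : 2 ≤ F.card := Finset.one_lt_card.2 ⟨0, h0F, 1, h1F, by norm_num⟩
  obtain ⟨r, hr⟩ : ∃ r, F.card = r + 2 := ⟨F.card - 2, by omega⟩
  obtain ⟨s, hsm, hs0, hs1, hmemF, hsurjF⟩ := enum_finset hr h0F h1F hsubF
  refine ⟨r, s, fun j => stepOf f t (s j.castSucc), hsm, hs0, hs1, ?_⟩
  intro j x hx1 hx2
  have hx01 : x ∈ Set.Ico (0:ℝ) 1 :=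
    ⟨(hsubF _ (hmemF j.castSucc)).1.trans hx1,
      lt_of_lt_of_le hx2 (hsubF _ (hmemF j.succ)).2⟩
  obtain ⟨i, hi1, hi2⟩ := cover_exists ht hx01
  have h1' : t i.castSucc ≤ s j.castSucc := by
    obtain ⟨j₁, hj₁⟩ := hsurjF (t i.castSucc)
      (Finset.mem_image_of_mem t (Finset.mem_univ _))
    have hlt1 : s j₁ < s j.succ := by rw [hj₁]; exact lt_of_le_of_lt hi1 hx2
    have hj₁lt : j₁ < j.succ := hsm.lt_iff_lt.1 hlt1
    have hj₁le : j₁ ≤ j.castSucc := by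
      rw [Fin.le_def, Fin.coe_castSucc]
      rw [Fin.lt_def, Fin.val_succ] at hj₁lt
      omega
    calc t i.castSucc = s j₁ := hj₁.symm
      _ ≤ s j.castSucc := hsm.monotone hj₁le
  show stepOf f t x = stepOf f t (s j.castSucc)
  rw [stepOf_eq ht.1 ⟨hi1, hi2⟩, stepOf_eq ht.1 ⟨h1', hx1.trans_lt hi2⟩]

lemma stepOf_jumpcard (f : ℝ → ℝ) {k : ℕ} {t : Fin (k+2) → ℝ} (ht : t ∈ T k) :
    (jumpSet (stepOf f t)).ncard ≤ k := by
  set D : Set (Fin (k+2)) := Set.univ \ {0, Fin.last (k+1)} with hD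
  have hsubJ : jumpSet (stepOf f t) ⊆ t '' D :=
    jumpSet_subset ht (stepOf_hval ht.1)
  calc (jumpSet (stepOf f t)).ncard ≤ (t '' D).ncard :=
        Set.ncard_le_ncard hsubJ (D.toFinite.image t)
    _ ≤ D.ncard := Set.ncard_image_le D.toFinite
    _ = k := by
        rw [hD, Set.ncard_diff (Set.subset_univ _), Set.ncard_univ,
          Set.ncard_pair (by simp [Fin.ext_iff] : (0 : Fin (k+2)) ≠ Fin.last (k+1))]
        simp [Nat.card_eq_fintype_card]

lemma stepOf_integral {f : ℝ → ℝ} (hf1 : IntegrableOn f (Set.Ico (0:ℝ) 1))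
    (hf2 : IntegrableOn (fun x => (f x)^2) (Set.Ico (0:ℝ) 1))
    {k : ℕ} {t : Fin (k+2) → ℝ} (ht : t ∈ T k)
    (hint : IntegrableOn (fun x => (f x - stepOf f t x)^2) (Set.Ico (0:ℝ) 1)) :
    ∫ x in Set.Ico (0:ℝ) 1, (f x - stepOf f t x)^2 = E f k t := by
  rw [sum_partition hint ht, E]
  apply Finset.sum_congr rfl
  intro i _
  rcases eq_or_lt_of_le (ht.1 (Fin.castSucc_le_succ i)) with heq | hlt
  · rw [← heq, intervalIntegral.integral_same, err_self]
  · have h0i : 0 ≤ t i.castSucc := (T_mem_icc ht _).1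
    have h1i : t i.succ ≤ 1 := (T_mem_icc ht _).2
    rw [err_eq hf1 hf2 h0i hlt h1i,
      intervalIntegral.integral_of_le hlt.le, intervalIntegral.integral_of_le hlt.le,
      integral_Ioc_eq_integral_Ioo, integral_Ioc_eq_integral_Ioo]
    apply setIntegral_congr_fun measurableSet_Ioo
    intro x hx
    dsimp only
    rw [stepOf_eq ht.1 ⟨hx.1.le, hx.2⟩, pieceVal]

lemma lb {f h : ℝ → ℝ} (hf1 : IntegrableOn f (Set.Ico (0:ℝ) 1))
    (hf2 : IntegrableOn (fun x => (f x)^2) (Set.Ico (0:ℝ) 1))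
    (hstep : IsStepFn h)
    (hint : IntegrableOn (fun x => (f x - h x)^2) (Set.Ico (0:ℝ) 1)) :
    ∃ t ∈ T ((jumpSet h).ncard),
      E f ((jumpSet h).ncard) t ≤ ∫ x in Set.Ico (0:ℝ) 1, (f x - h x)^2 := by
  classical
  obtain ⟨m', tw, aw, hsmw, h0w, h1w, hvalw⟩ := id hstep
  have htw : tw ∈ T m' := ⟨hsmw.monotone, h0w, h1w⟩
  have hJfin : (jumpSet h).Finite :=
    ((Set.finite_range tw).subset (Set.image_subset_range _ _)).subset
      (jumpSet_subset htw hvalw)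
  have hJsub : ∀ x ∈ jumpSet h, x ∈ Set.Ioo (0:ℝ) 1 := fun x hx => hx.1
  set m := (jumpSet h).ncard with hm
  set F : Finset ℝ := insert 0 (insert 1 hJfin.toFinset) with hF
  have h0F : (0:ℝ) ∈ F := Finset.mem_insert_self _ _
  have h1F : (1:ℝ) ∈ F := by rw [hF]; exact Finset.mem_insert_of_mem (Finset.mem_insert_self _ _)
  have h1nm : (1:ℝ) ∉ hJfin.toFinset := by
    rw [Set.Finite.mem_toFinset]
    intro hc
    exact absurd (hJsub 1 hc).2 (lt_irrefl 1)
  have h0nm : (0:ℝ) ∉ insert 1 hJfin.toFinset := by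
    rw [Finset.mem_insert]
    rintro (hc | hc)
    · norm_num at hc
    · rw [Set.Finite.mem_toFinset] at hc
      exact absurd (hJsub 0 hc).1 (lt_irrefl 0)
  have hcard : F.card = m + 2 := by
    rw [hF, Finset.card_insert_of_notMem h0nm, Finset.card_insert_of_notMem h1nm,
      ← Set.ncard_eq_toFinset_card _ hJfin]
  have hsubF : ∀ x ∈ F, 0 ≤ x ∧ x ≤ 1 := by
    intro x hx
    rw [hF, Finset.mem_insert, Finset.mem_insert, Set.Finite.mem_toFinset] at hx
    rcases hx with rfl | rfl | hx
    · norm_num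
    · norm_num
    · exact ⟨(hJsub x hx).1.le, (hJsub x hx).2.le⟩
  obtain ⟨s, hsm, hs0, hs1, hmemF, hsurjF⟩ := enum_finset hcard h0F h1F hsubF
  have hsT : s ∈ T m := ⟨hsm.monotone, hs0, hs1⟩
  refine ⟨s, hsT, ?_⟩
  rw [sum_partition hint hsT, E]
  apply Finset.sum_le_sum
  intro i _
  have hlt : s i.castSucc < s i.succ := hsm (Fin.castSucc_lt_succ (i := i))
  have hIoosub : Set.Ioo (s i.castSucc) (s i.succ) ⊆ Set.Ioo 0 1 := by
    intro x hx
    exact ⟨lt_of_le_of_lt (hsubF _ (hmemF i.castSucc)).1 hx.1,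
      lt_of_lt_of_le hx.2 (hsubF _ (hmemF i.succ)).2⟩
  have hnj : ∀ x ∈ Set.Ioo (s i.castSucc) (s i.succ), x ∉ jumpSet h := by
    intro x hx hxj
    have hxF : x ∈ F := by
      rw [hF, Finset.mem_insert, Finset.mem_insert, Set.Finite.mem_toFinset]
      right; right; exact hxj
    obtain ⟨j', hj'⟩ := hsurjF x hxF
    rw [← hj'] at hx
    have hl : i.castSucc < j' := hsm.lt_iff_lt.1 hx.1
    have hr : j' < i.succ := hsm.lt_iff_lt.1 hx.2
    rw [Fin.lt_def, Fin.coe_castSucc] at hl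
    rw [Fin.lt_def, Fin.val_succ] at hr
    omega
  obtain ⟨c, hc⟩ := step_const_on hstep hlt hIoosub hnj
  have h0i : 0 ≤ s i.castSucc := (hsubF _ (hmemF i.castSucc)).1
  have h1i : s i.succ ≤ 1 := (hsubF _ (hmemF i.succ)).2
  calc err f (s i.castSucc) (s i.succ)
      ≤ ∫ x in s i.castSucc..s i.succ, (f x - c)^2 :=
        err_le_sq hf1 hf2 h0i hlt.le h1i c
    _ = ∫ x in s i.castSucc..s i.succ, (f x - h x)^2 := by
        rw [intervalIntegral.integral_of_le hlt.le, intervalIntegral.integral_of_le hlt.le,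
          integral_Ioc_eq_integral_Ioo, integral_Ioc_eq_integral_Ioo]
        apply setIntegral_congr_fun measurableSet_Ioo
        intro x hx
        dsimp only
        rw [hc x hx]

lemma L2d_sq (f g : ℝ → ℝ) :
    (L2d f g)^2 = ∫ x in Set.Ico (0:ℝ) 1, (f x - g x)^2 :=
  Real.sq_sqrt (setIntegral_nonneg measurableSet_Ico (fun x _ => sq_nonneg _))

end PZ

end

/-- For every `f ∈ L²([0,1])` and every `γ ≥ 0`, the continuous Potts
functional `H_γ^∞(·, f)` attains its minimum on `L²([0,1])`: its argmin is nonempty. -/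
theorem potts_argmin_nonempty (f : ℝ → ℝ) (hf : MemLp f 2 mu01) (γ : ℝ) (hγ : 0 ≤ γ) :
    ∃ g : ℝ → ℝ, MemLp g 2 mu01 ∧
      ∀ h : ℝ → ℝ, MemLp h 2 mu01 → Hinf γ g f ≤ Hinf γ h f := by
  by_cases hγ0 : γ = 0
  · refine ⟨f, hf, fun h _ => ?_⟩
    have hL : L2d f f = 0 := by simp [L2d]
    rw [Hinf, if_pos hγ0, hL]
    simp
  · have hγpos : 0 < γ := lt_of_le_of_ne hγ (Ne.symm hγ0)
    have hf1 : IntegrableOn f (Set.Ico (0:ℝ) 1) := by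
      have h' := memLp_one_iff_integrable.1
        (hf.mono_exponent (by norm_num : (1:ℝ≥0∞) ≤ 2))
      rw [mu01] at h'
      exact h'
    have hf2 : IntegrableOn (fun x => (f x)^2) (Set.Ico (0:ℝ) 1) := by
      have h' := hf.integrable_sq
      rw [mu01] at h'
      exact h'
    set A : ℝ := ∫ x in Set.Ico (0:ℝ) 1, (f x)^2 with hA
    have hA0 : 0 ≤ A := setIntegral_nonneg measurableSet_Ico (fun x _ => sq_nonneg _)
    have hAI : A = ∫ x in (0:ℝ)..1, (f x)^2 := by
      rw [hA, intervalIntegral.integral_of_le (by norm_num : (0:ℝ) ≤ 1),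
        integral_Ioc_eq_integral_Ioo, integral_Ico_eq_integral_Ioo]
    set K : ℕ := ⌈A / γ⌉₊ with hK
    have hAK : A ≤ γ * K := by
      have h1 := Nat.le_ceil (A/γ)
      calc A = γ * (A/γ) := by field_simp
        _ ≤ γ * K := mul_le_mul_of_nonneg_left h1 hγ
    have hmin : ∀ k : ℕ, ∃ t ∈ PZ.T k, ∀ s ∈ PZ.T k, PZ.E f k t ≤ PZ.E f k s := by
      intro k
      obtain ⟨t, ht, hm⟩ := (PZ.T_compact k).exists_isMinOn (PZ.T_nonempty k)
        (PZ.E_contOn hf1 hf2 k)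
      exact ⟨t, ht, fun s hs => isMinOn_iff.1 hm s hs⟩
    choose tm htm hmle using hmin
    set e : ℕ → ℝ := fun k => PZ.E f k (tm k) with he
    have he0 : e 0 ≤ A := by
      obtain ⟨t01, ht01⟩ := PZ.T_nonempty 0
      have h1 := hmle 0 t01 ht01
      have h2 : PZ.E f 0 t01 = PZ.err f 0 1 := by
        rw [PZ.E, Fin.sum_univ_one]
        have hcs : ((0:Fin 1).castSucc) = (0 : Fin 2) := rfl
        have hsc : ((0:Fin 1).succ) = Fin.last 1 := rfl
        rw [hcs, hsc, ht01.2.1, ht01.2.2]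
      have h3 : PZ.err f 0 1 ≤ ∫ x in (0:ℝ)..1, (f x)^2 :=
        PZ.err_le_S2 (by norm_num : (0:ℝ) ≤ 1)
      rw [he]
      calc PZ.E f 0 (tm 0) ≤ PZ.E f 0 t01 := h1
        _ = PZ.err f 0 1 := h2
        _ ≤ ∫ x in (0:ℝ)..1, (f x)^2 := h3
        _ = A := hAI.symm
    set φ : ℕ → ℝ := fun k => γ * k + e k with hφ
    obtain ⟨k₀, hk₀mem, hk₀min⟩ := Finset.exists_min_image (Finset.range (K+1)) φ
      ⟨0, Finset.mem_range.2 (by omega)⟩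
    set g := PZ.stepOf f (tm k₀) with hg
    have hgstep : IsStepFn g := PZ.stepOf_isStep f (htm k₀)
    have hgmem : MemLp g 2 mu01 := PZ.memℒp_of_step hgstep
    have hgint : IntegrableOn (fun x => (f x - g x)^2) (Set.Ico (0:ℝ) 1) := by
      have h' := (hf.sub hgmem).integrable_sq
      rw [mu01] at h'
      exact h'
    have hgL2 : (L2d f g)^2 = e k₀ := by
      rw [PZ.L2d_sq, he]
      exact PZ.stepOf_integral hf1 hf2 (htm k₀) hgint
    have hgJ : (jumpSet g).ncard ≤ k₀ := PZ.stepOf_jumpcard f (htm k₀)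
    have hHg : Hinf γ g f ≤ ENNReal.ofReal (φ k₀) := by
      rw [Hinf, if_neg hγ0, HinfP, if_pos hgstep]
      apply ENNReal.ofReal_le_ofReal
      have hc : γ * ((jumpSet g).ncard : ℝ) ≤ γ * k₀ :=
        mul_le_mul_of_nonneg_left (Nat.cast_le.2 hgJ) hγ
      rw [hgL2]
      simp only [hφ]
      linarith
    have hφ0A : φ k₀ ≤ A := by
      have h1 := hk₀min 0 (Finset.mem_range.2 (by omega))
      have h2 : φ 0 = e 0 := by simp [hφ]
      linarith [he0, h2 ▸ h1]
    refine ⟨g, hgmem, ?_⟩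
    intro h hh
    by_cases hhstep : IsStepFn h
    · have hhint : IntegrableOn (fun x => (f x - h x)^2) (Set.Ico (0:ℝ) 1) := by
        have h' := (hf.sub hh).integrable_sq
        rw [mu01] at h'
        exact h'
      set m := (jumpSet h).ncard with hm
      have hD : (L2d f h)^2 = ∫ x in Set.Ico (0:ℝ) 1, (f x - h x)^2 := PZ.L2d_sq f h
      have hD0 : 0 ≤ (L2d f h)^2 := sq_nonneg _
      refine le_trans hHg ?_
      rw [Hinf, if_neg hγ0, HinfP, if_pos hhstep]
      refine ENNReal.ofReal_le_ofReal ?_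
      by_cases hmK : m ≤ K
      · obtain ⟨t, htT, htle⟩ := PZ.lb hf1 hf2 hhstep hhint
        have h1 : e m ≤ (L2d f h)^2 := by
          rw [hD]
          exact le_trans (hmle m t htT) htle
        have h2 : φ k₀ ≤ φ m := hk₀min m (Finset.mem_range.2 (by omega))
        have h3 : φ m = γ * m + e m := rfl
        rw [h3] at h2
        linarith
      · have hm1 : (K:ℝ) ≤ (m:ℝ) := Nat.cast_le.2 (by omega)
        have h4 : γ * K ≤ γ * m := mul_le_mul_of_nonneg_left hm1 hγ
        linarith
    · refine le_trans hHg ?_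
      rw [Hinf, if_neg hγ0, HinfP, if_neg hhstep]
      exact le_top
end

section
/- Let f : [0,1] → ℝ have finite total variation. Then f ∈ A^1; that is, sup_{k≥1} k·Δ_k(f) < ∞, where Δ_k(f) = inf{‖g − f‖_{L²([0,1])} : g ∈ S([0,1]), #J(g) ≤ k}. -/
open MeasureTheory Filter Set ProbabilityTheory
open scoped Classical ENNReal NNReal

section BVAux

lemma bv_osc (f : ℝ → ℝ) (hf : BoundedVariationOn f (Set.Icc 0 1)) {x y : ℝ}
    (hx : x ∈ Set.Icc (0:ℝ) 1) (hy : y ∈ Set.Icc (0:ℝ) 1) (hxy : x ≤ y) :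
    |f y - f x| ≤ variationOnFromTo f (Set.Icc 0 1) 0 y
      - variationOnFromTo f (Set.Icc 0 1) 0 x := by
  have h0 : (0:ℝ) ∈ Set.Icc (0:ℝ) 1 := ⟨le_rfl, zero_le_one⟩
  have hadd := variationOnFromTo.add hf.locallyBoundedVariationOn h0 hx hy
  have hdist : dist (f y) (f x) ≤ (eVariationOn f (Set.Icc 0 1 ∩ Set.Icc x y)).toReal :=
    (hf.mono Set.inter_subset_left).dist_le ⟨hy, hxy, le_rfl⟩ ⟨hx, le_rfl, hxy⟩
  rw [Real.dist_eq, ← variationOnFromTo.eq_of_le f _ hxy] at hdist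
  linarith

lemma bv_step_approx (f : ℝ → ℝ) (hf : BoundedVariationOn f (Set.Icc 0 1))
    (k : ℕ) (hk : 1 ≤ k) :
    ∃ g : ℝ → ℝ, IsStepFn g ∧ (jumpSet g).ncard ≤ k ∧
      L2d g f ≤ (eVariationOn f (Set.Icc 0 1)).toReal / k := by
  classical
  set V : ℝ := (eVariationOn f (Set.Icc 0 1)).toReal with hVdef
  have hV0 : 0 ≤ V := ENNReal.toReal_nonneg
  have hk0 : (0:ℝ) < k := by exact_mod_cast hk
  set v : ℝ → ℝ := variationOnFromTo f (Set.Icc 0 1) 0 with hvdef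
  have h0m : (0:ℝ) ∈ Set.Icc (0:ℝ) 1 := ⟨le_rfl, zero_le_one⟩
  have h1m : (1:ℝ) ∈ Set.Icc (0:ℝ) 1 := ⟨zero_le_one, le_rfl⟩
  have hLBV := hf.locallyBoundedVariationOn
  have vmono : MonotoneOn v (Set.Icc 0 1) := variationOnFromTo.monotoneOn hLBV h0m
  have vnonneg : ∀ x ∈ Set.Icc (0:ℝ) 1, 0 ≤ v x := fun x hx =>
    variationOnFromTo.nonneg_of_le f _ hx.1
  have hv1 : v 1 = V := by
    rw [hvdef, hVdef]
    rw [variationOnFromTo.eq_of_le f _ zero_le_one, Set.inter_self]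
  have vleV : ∀ x ∈ Set.Icc (0:ℝ) 1, v x ≤ V := fun x hx => hv1 ▸ vmono hx h1m hx.2
  set S : ℕ → Set ℝ := fun j => {x | x ∈ Set.Icc (0:ℝ) 1 ∧ (j:ℝ) * V / k ≤ v x} with hSdef
  set t : ℕ → ℝ := fun j => sInf (S j) with htdef
  have hbdd : ∀ j, BddBelow (S j) := fun j => ⟨0, fun x hx => hx.1.1⟩
  have hone : ∀ j, j ≤ k → (1:ℝ) ∈ S j := by
    intro j hj
    refine ⟨h1m, ?_⟩
    rw [hv1, div_le_iff₀ hk0]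
    have : (j:ℝ) ≤ k := by exact_mod_cast hj
    nlinarith
  have hSne : ∀ j, j ≤ k → (S j).Nonempty := fun j hj => ⟨1, hone j hj⟩
  have ht_le : ∀ j : ℕ, ∀ x ∈ Set.Icc (0:ℝ) 1, (j:ℝ)*V/k ≤ v x → t j ≤ x := fun j x hx h =>
    csInf_le (hbdd j) ⟨hx, h⟩
  have ht_ge : ∀ j, j ≤ k → ∀ x ∈ Set.Icc (0:ℝ) 1, v x < (j:ℝ)*V/k → x ≤ t j := by
    intro j hj x hx hvx
    by_contra h
    obtain ⟨s, hs, hsx⟩ := exists_lt_of_csInf_lt (hSne j hj) (not_le.1 h)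
    exact absurd (hs.2.trans (vmono hs.1 hx hsx.le)) (not_le.2 hvx)
  -- the finite set of breakpoints
  set P : Finset ℝ := ((Finset.Icc 1 k).image t).filter (fun z => 0 < z ∧ z < 1) with hPdef
  set T : Finset ℝ := insert 0 (insert 1 P) with hTdef
  have hPk : P.card ≤ k := by
    refine le_trans (Finset.card_filter_le _ _) (le_trans Finset.card_image_le ?_)
    simp
  have h0T : (0:ℝ) ∈ T := Finset.mem_insert_self _ _
  have h1T : (1:ℝ) ∈ T := Finset.mem_insert_of_mem (Finset.mem_insert_self _ _)
  have hT01 : ∀ z ∈ T, z ∈ Set.Icc (0:ℝ) 1 := by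
    intro z hz
    rcases Finset.mem_insert.1 hz with rfl | hz
    · exact h0m
    rcases Finset.mem_insert.1 hz with rfl | hz
    · exact h1m
    · have := (Finset.mem_filter.1 hz).2
      exact ⟨this.1.le, this.2.le⟩
  have hTcard : 2 ≤ T.card := Finset.one_lt_card.2 ⟨0, h0T, 1, h1T, by norm_num⟩
  obtain ⟨m, hm⟩ : ∃ m, T.card = m + 2 := ⟨T.card - 2, by omega⟩
  obtain ⟨τ, hτmono, hτT, hτsurj, hτ0, hτlast⟩ :
      ∃ τ : Fin (m+2) → ℝ, StrictMono τ ∧ (∀ i, τ i ∈ T) ∧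
        (∀ z ∈ T, ∃ i, τ i = z) ∧ τ 0 = 0 ∧ τ (Fin.last (m+1)) = 1 := by
    set e := T.orderIsoOfFin hm with hedef
    set τ : Fin (m+2) → ℝ := fun i => (e i : ℝ) with hτdef
    have hτT : ∀ i, τ i ∈ T := fun i => (e i).2
    have hτmono : StrictMono τ := fun i j hij => Subtype.coe_lt_coe.2 (e.strictMono hij)
    have hτ0 : τ 0 = 0 := by
      refine le_antisymm ?_ (hT01 _ (hτT 0)).1
      have h := e.monotone (Fin.zero_le (e.symm ⟨0, h0T⟩))
      rw [OrderIso.apply_symm_apply] at h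
      exact Subtype.coe_le_coe.2 h
    have hτlast : τ (Fin.last (m+1)) = 1 := by
      refine le_antisymm (hT01 _ (hτT _)).2 ?_
      have h := e.monotone (Fin.le_last (e.symm ⟨1, h1T⟩))
      rw [OrderIso.apply_symm_apply] at h
      exact Subtype.coe_le_coe.2 h
    have hτsurj : ∀ z ∈ T, ∃ i, τ i = z := by
      intro z hz
      refine ⟨e.symm ⟨z, hz⟩, ?_⟩
      rw [hτdef]
      simp
    exact ⟨τ, hτmono, hτT, hτsurj, hτ0, hτlast⟩
  have hconsec : ∀ i : Fin (m+1), ∀ z ∈ T, ¬ (τ i.castSucc < z ∧ z < τ i.succ) := by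
    rintro i z hz ⟨hz1, hz2⟩
    obtain ⟨j, rfl⟩ := hτsurj z hz
    have hj1 : i.castSucc < j := hτmono.lt_iff_lt.1 hz1
    have hj2 : j < i.succ := hτmono.lt_iff_lt.1 hz2
    rw [Fin.lt_def] at hj1 hj2
    simp only [Fin.coe_castSucc, Fin.val_succ] at hj1 hj2
    omega
  set a : Fin (m+1) → ℝ := fun i => f ((τ i.castSucc + τ i.succ)/2) with hadef
  have huniq : ∀ x : ℝ, ∀ i j : Fin (m+1),
      τ i.castSucc ≤ x → x < τ i.succ → τ j.castSucc ≤ x → x < τ j.succ → i = j := by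
    intro x i j hi1 hi2 hj1 hj2
    by_contra hne
    rcases lt_or_gt_of_ne hne with h | h
    · have hval : (i:ℕ) < (j:ℕ) := h
      have hle : i.succ ≤ j.castSucc := by
        rw [Fin.le_def]
        simp only [Fin.coe_castSucc, Fin.val_succ]
        omega
      have := hτmono.monotone hle
      linarith
    · have hval : (j:ℕ) < (i:ℕ) := h
      have hle : j.succ ≤ i.castSucc := by
        rw [Fin.le_def]
        simp only [Fin.coe_castSucc, Fin.val_succ]
        omega
      have := hτmono.monotone hle
      linarith
  set g : ℝ → ℝ := fun x =>
    if h : ∃ i : Fin (m+1), τ i.castSucc ≤ x ∧ x < τ i.succ then a h.choose else a 0 with hgdef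
  have hstep : ∀ i : Fin (m+1), ∀ x : ℝ, τ i.castSucc ≤ x → x < τ i.succ → g x = a i := by
    intro i x h1 h2
    have hex : ∃ i : Fin (m+1), τ i.castSucc ≤ x ∧ x < τ i.succ := ⟨i, h1, h2⟩
    rw [hgdef]
    simp only [dif_pos hex]
    exact congrArg a (huniq x _ i hex.choose_spec.1 hex.choose_spec.2 h1 h2)
  have hgstep : IsStepFn g := ⟨m, τ, a, hτmono, hτ0, hτlast, hstep⟩
  have hlocate : ∀ x : ℝ, 0 < x → x < 1 → (∀ i, τ i ≠ x) →
      ∃ i : Fin (m+1), τ i.castSucc < x ∧ x < τ i.succ := by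
    intro x hx0 hx1 hxτ
    have hne : (Finset.univ.filter (fun l : Fin (m+2) => τ l < x)).Nonempty :=
      ⟨0, Finset.mem_filter.2 ⟨Finset.mem_univ _, by rw [hτ0]; exact hx0⟩⟩
    set l := (Finset.univ.filter (fun l : Fin (m+2) => τ l < x)).max' hne with hldef
    have hlx : τ l < x := (Finset.mem_filter.1 (Finset.max'_mem _ hne)).2
    have hllast : (l:ℕ) < m + 1 := by
      rcases lt_or_eq_of_le (Nat.lt_succ_iff.1 l.isLt) with h | h
      · exact h
      · exfalso
        have hleq : τ l = 1 := by
          rw [← hτlast]; congr 1; exact Fin.ext h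
        rw [hleq] at hlx; linarith
    have hcast : (⟨(l:ℕ), hllast⟩ : Fin (m+1)).castSucc = l := Fin.ext rfl
    refine ⟨⟨(l:ℕ), hllast⟩, by rw [hcast]; exact hlx, ?_⟩
    by_contra h
    have hle : τ (⟨(l:ℕ), hllast⟩ : Fin (m+1)).succ ≤ x := not_lt.1 h
    have hlt : τ (⟨(l:ℕ), hllast⟩ : Fin (m+1)).succ < x := lt_of_le_of_ne hle (hxτ _)
    have hmem : (⟨(l:ℕ), hllast⟩ : Fin (m+1)).succ ∈
        Finset.univ.filter (fun l : Fin (m+2) => τ l < x) :=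
      Finset.mem_filter.2 ⟨Finset.mem_univ _, hlt⟩
    have hmax := Finset.le_max' _ _ hmem
    rw [← hldef, Fin.le_def] at hmax
    simp only [Fin.val_succ] at hmax
    omega
  have hcont : ∀ x : ℝ, 0 < x → x < 1 → (∀ i, τ i ≠ x) → ContinuousAt g x := by
    intro x hx0 hx1 hxτ
    obtain ⟨i, h1, h2⟩ := hlocate x hx0 hx1 hxτ
    have hev : g =ᶠ[nhds x] fun _ => a i := by
      filter_upwards [Ioo_mem_nhds h1 h2] with y hy
      exact hstep i y hy.1.le hy.2
    exact hev.continuousAt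
  have hjump : (jumpSet g).ncard ≤ k := by
    have hsub : jumpSet g ⊆ (P : Set ℝ) := by
      rintro z ⟨hz, hnc⟩
      have hzT : z ∈ T := by
        by_contra hzT
        exact hnc (hcont z hz.1 hz.2 (fun i h => hzT (h ▸ hτT i)))
      rcases Finset.mem_insert.1 hzT with rfl | hzT
      · exact absurd hz.1 (lt_irrefl 0)
      rcases Finset.mem_insert.1 hzT with rfl | hzT
      · exact absurd hz.2 (lt_irrefl 1)
      · exact Finset.mem_coe.mpr hzT
    calc (jumpSet g).ncard ≤ (P : Set ℝ).ncard :=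
          Set.ncard_le_ncard hsub P.finite_toSet
      _ = P.card := Set.ncard_coe_finset P
      _ ≤ k := hPk
  -- oscillation on each open piece
  have hosc : ∀ i : Fin (m+1), ∀ x ∈ Set.Ioo (τ i.castSucc) (τ i.succ),
      ∀ y ∈ Set.Ioo (τ i.castSucc) (τ i.succ), x ≤ y → |f y - f x| ≤ V / k := by
    intro i x hx y hy hxy
    have hp0 : (0:ℝ) ≤ τ i.castSucc := (hT01 _ (hτT _)).1
    have hq1 : τ i.succ ≤ 1 := (hT01 _ (hτT _)).2
    have hxm : x ∈ Set.Icc (0:ℝ) 1 := ⟨hp0.trans hx.1.le, hx.2.le.trans hq1⟩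
    have hym : y ∈ Set.Icc (0:ℝ) 1 := ⟨hp0.trans hy.1.le, hy.2.le.trans hq1⟩
    have hvd : v y - v x ≤ V / k := by
      rcases eq_or_lt_of_le hV0 with hV | hV
      · have h1 : v y ≤ V := vleV y hym
        have h2 : 0 ≤ v x := vnonneg x hxm
        rw [← hV] at h1 ⊢
        simp only [zero_div]
        linarith
      · set j : ℕ := min k ⌊v x * k / V⌋₊ with hjdef
        have hjk : j ≤ k := min_le_left _ _
        have hwnn : 0 ≤ v x * k / V := by
          have := vnonneg x hxm
          positivity
        have hLj : (j:ℝ) * V / k ≤ v x := by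
          have h1 : (j:ℝ) ≤ v x * k / V := by
            refine le_trans ?_ (Nat.floor_le hwnn)
            exact_mod_cast min_le_right _ _
          rw [div_le_iff₀ hk0]
          have h2 : (j:ℝ) * V ≤ (v x * k / V) * V := by nlinarith
          calc (j:ℝ) * V ≤ (v x * k / V) * V := h2
            _ = v x * k := by field_simp
        rcases eq_or_lt_of_le hjk with hjeq | hjlt
        · have hVle : V ≤ v x := by
            rw [hjeq] at hLj
            have heq : (k:ℝ) * V / k = V := by field_simp
            linarith
          have := vleV y hym
          have hVk : 0 ≤ V / k := by positivity
          linarith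
        · have hjfl : j = ⌊v x * k / V⌋₊ := by omega
          have hwlt : v x * k / V < (j:ℝ) + 1 := by
            have h4 := Nat.lt_floor_add_one (v x * ↑k / V)
            rw [hjfl]
            exact_mod_cast h4
          have hvxlt : v x < ((j:ℝ)+1) * V / k := by
            rw [lt_div_iff₀ hk0]
            have h3 : v x * k = (v x * k / V) * V := by field_simp
            rw [h3]
            nlinarith
          have hxle : x ≤ t (j+1) := by
            apply ht_ge (j+1) (by omega) x hxm
            push_cast
            exact hvxlt
          have htm : t (j+1) ∈ Set.Icc (0:ℝ) 1 := by
            constructor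
            · exact le_csInf (hSne (j+1) (by omega)) fun z hz => hz.1.1
            · exact ht_le (j+1) 1 h1m (hone (j+1) (by omega)).2
          have hqle : τ i.succ ≤ t (j+1) := by
            by_contra h
            push_neg at h
            have htmemT : t (j+1) ∈ T := by
              rw [hTdef]
              apply Finset.mem_insert_of_mem
              apply Finset.mem_insert_of_mem
              rw [hPdef]
              refine Finset.mem_filter.2 ⟨Finset.mem_image.2
                ⟨j+1, Finset.mem_Icc.2 ⟨by omega, by omega⟩, rfl⟩, ?_, ?_⟩
              · exact lt_of_le_of_lt hp0 (lt_of_lt_of_le hx.1 hxle)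
              · exact h.trans_le hq1
            exact hconsec i _ htmemT ⟨lt_of_lt_of_le hx.1 hxle, h⟩
          have hvy : v y < ((j:ℝ)+1) * V / k := by
            by_contra hcon
            push_neg at hcon
            have hyS : y ∈ S (j+1) := ⟨hym, by push_cast; exact hcon⟩
            have hts : t (j+1) ≤ y := csInf_le (hbdd (j+1)) hyS
            have hylt : y < t (j+1) := lt_of_lt_of_le hy.2 hqle
            linarith
          have hdiff : ((j:ℝ)+1) * V / k - (j:ℝ) * V / k = V / k := by ring
          linarith
    have := bv_osc f hf hxm hym hxy
    rw [← hvdef] at this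
    linarith
  -- pointwise bound off the breakpoints
  have hpoint : ∀ x ∈ Set.Ico (0:ℝ) 1, x ∉ (T : Set ℝ) → |g x - f x| ≤ V / k := by
    intro x hx hxT
    have hx0 : 0 < x := lt_of_le_of_ne hx.1 (fun h => hxT (by rw [← h]; exact h0T))
    have hxτ : ∀ i, τ i ≠ x := fun i h => hxT (by rw [← h]; exact hτT i)
    obtain ⟨i, h1, h2⟩ := hlocate x hx0 hx.2 hxτ
    have hgx : g x = a i := hstep i x h1.le h2
    have hpq : τ i.castSucc < τ i.succ := h1.trans h2
    have hmid : (τ i.castSucc + τ i.succ)/2 ∈ Set.Ioo (τ i.castSucc) (τ i.succ) :=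
      ⟨by linarith, by linarith⟩
    have hai : a i = f ((τ i.castSucc + τ i.succ)/2) := rfl
    rw [hgx, hai]
    rcases le_total ((τ i.castSucc + τ i.succ)/2) x with h | h
    · rw [abs_sub_comm]
      exact hosc i _ hmid x ⟨h1, h2⟩ h
    · exact hosc i x ⟨h1, h2⟩ _ hmid h
  -- L2 bound
  have hL2 : L2d g f ≤ V / k := by
    have hVk : 0 ≤ V / k := by positivity
    have hfm : IsFiniteMeasure (volume.restrict (Set.Ico (0:ℝ) 1)) := by
      constructor
      rw [Measure.restrict_apply_univ]
      simp [Real.volume_Ico]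
    have hae : ∀ᵐ x ∂(volume.restrict (Set.Ico (0:ℝ) 1)), ‖(g x - f x)^2‖ ≤ (V/k)^2 := by
      have h1 := ae_restrict_mem (μ := volume) (measurableSet_Ico : MeasurableSet (Set.Ico (0:ℝ) 1))
      have h2 : ∀ᵐ x ∂(volume.restrict (Set.Ico (0:ℝ) 1)), x ∉ (T : Set ℝ) := by
        rw [ae_iff]
        simp only [not_not]
        have : {x : ℝ | x ∈ (T : Set ℝ)} = (T : Set ℝ) := rfl
        rw [this, Measure.restrict_apply T.finite_toSet.measurableSet]
        exact measure_mono_null Set.inter_subset_left (T.finite_toSet.measure_zero _)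
      filter_upwards [h1, h2] with x hx hxT
      have hb := hpoint x hx hxT
      rw [Real.norm_eq_abs, abs_of_nonneg (sq_nonneg _), ← sq_abs]
      exact pow_le_pow_left₀ (abs_nonneg _) hb 2
    have hnorm := norm_integral_le_of_norm_le_const hae
    rw [measureReal_def, Measure.restrict_apply_univ, Real.volume_Ico] at hnorm
    have hint : ∫ x in Set.Ico (0:ℝ) 1, (g x - f x)^2 ≤ (V/k)^2 := by
      calc ∫ x in Set.Ico (0:ℝ) 1, (g x - f x)^2
          ≤ ‖∫ x in Set.Ico (0:ℝ) 1, (g x - f x)^2‖ := le_abs_self _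
        _ ≤ (V/k)^2 := by simpa using hnorm
    simp only [L2d]
    rw [← Real.sqrt_sq hVk]
    exact Real.sqrt_le_sqrt hint
  exact ⟨g, hgstep, hjump, hL2⟩

end BVAux

/-- **Example 1.** A function of finite total variation on `[0,1]`
belongs to the approximation space `A¹`. -/
theorem bv_mem_approx_one (f : ℝ → ℝ) (hf : BoundedVariationOn f (Set.Icc 0 1)) :
    MemApprox 1 f := by
  constructor
  · refine ⟨|f 0| + (eVariationOn f (Set.Icc 0 1)).toReal, ?_⟩
    intro x hx
    have hxm : x ∈ Set.Icc (0:ℝ) 1 := ⟨hx.1, hx.2.le⟩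
    have hd := hf.dist_le hxm ⟨le_rfl, zero_le_one⟩
    rw [Real.dist_eq] at hd
    calc |f x| = |(f x - f 0) + f 0| := by ring_nf
      _ ≤ |f x - f 0| + |f 0| := abs_add_le _ _
      _ ≤ |f 0| + (eVariationOn f (Set.Icc 0 1)).toReal := by linarith
  · refine ⟨(eVariationOn f (Set.Icc 0 1)).toReal, ?_⟩
    intro k hk
    obtain ⟨g, hg, hj, hL⟩ := bv_step_approx f hf k hk
    have hk0 : (0:ℝ) < k := by exact_mod_cast hk
    have hD : Delta k f ≤ (eVariationOn f (Set.Icc 0 1)).toReal / k := by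
      refine le_trans (csInf_le ?_ ⟨g, hg, hj, rfl⟩) hL
      refine ⟨0, ?_⟩
      rintro d ⟨g', -, -, rfl⟩
      exact Real.sqrt_nonneg _
    calc (k:ℝ) ^ (1:ℝ) * Delta k f = (k:ℝ) * Delta k f := by rw [Real.rpow_one]
      _ ≤ (k:ℝ) * ((eVariationOn f (Set.Icc 0 1)).toReal / k) :=
          mul_le_mul_of_nonneg_left hD hk0.le
      _ = (eVariationOn f (Set.Icc 0 1)).toReal := by field_simp
end

section
/- Let (ξ_i^n)_{n∈ℕ, 1≤i≤n} be a triangular array of random variables satisfying Condition (A), and for n ≥ 2 define C_n = sup_{1≤i≤j≤n} (ξ_i^n + ⋯ + ξ_j^n)² / ((j − i + 1)·log n). Then limsup_{n→∞} C_n ≤ 12β almost surely. -/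
open MeasureTheory Filter Set ProbabilityTheory
open scoped Classical ENNReal NNReal

section SubgaussianHelpers

variable {Ω : Type*} [MeasurableSpace Ω] {P : Measure Ω}

lemma sum_attachFin_eq {n : ℕ} (s : Finset ℕ) (h : ∀ m ∈ s, m < n) (f : ℕ → ℝ) :
    ∑ l ∈ s.attachFin h, f (l : ℕ) = ∑ l ∈ s, f l := by
  apply Finset.sum_bij (fun (a : Fin n) (_ : a ∈ s.attachFin h) => (a : ℕ))
  · intro a ha; exact (Finset.mem_attachFin h).mp ha
  · intro a _ b _ hab; exact Fin.val_injective hab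
  · intro m hm; exact ⟨⟨m, h m hm⟩, (Finset.mem_attachFin h).mpr hm, rfl⟩
  · intros; rfl

lemma chernoff_abs_sum [IsProbabilityMeasure P]
    (n : ℕ) (X : ℕ → Ω → ℝ) (hmeas : ∀ i, Measurable (X i))
    (hind : iIndepFun
      (fun i : Fin n => X (i : ℕ)) P)
    (b : ℝ) (hb : 0 < b)
    (hm : ∀ i, i < n → ∀ ν : ℝ, Integrable (fun ω => Real.exp (ν * X i ω)) P ∧
      ∫ ω, Real.exp (ν * X i ω) ∂P ≤ Real.exp (b * ν^2))
    (i j : ℕ) (hij : i ≤ j) (hj : j < n) (t : ℝ) (ht : 0 ≤ t) :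
    P {ω | t ≤ |∑ l ∈ Finset.Icc i j, X l ω|} ≤
      ENNReal.ofReal (2 * Real.exp (-(t^2) / (4 * b * ((j:ℝ) - i + 1)))) := by
  set kR : ℝ := (j:ℝ) - i + 1 with hkR
  have hkRpos : 0 < kR := by
    have : (i:ℝ) ≤ (j:ℝ) := by exact_mod_cast hij
    simp only [hkR]; linarith
  have hlt : ∀ m ∈ Finset.Icc i j, m < n := fun m hm' =>
    lt_of_le_of_lt (Finset.mem_Icc.mp hm').2 hj
  set T : Finset (Fin n) := (Finset.Icc i j).attachFin hlt with hT
  have hcard : (T.card : ℝ) = kR := by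
    rw [hT, Finset.card_attachFin, Nat.card_Icc]
    have : j + 1 - i = j - i + 1 := by omega
    rw [this]
    push_cast [Nat.cast_sub hij]
    ring
  set Xf : Fin n → Ω → ℝ := fun l => X (l : ℕ) with hXf
  set S : Ω → ℝ := ∑ l ∈ T, Xf l with hSdef
  have hSeq : ∀ ω, S ω = ∑ l ∈ Finset.Icc i j, X l ω := by
    intro ω
    rw [hSdef, Finset.sum_apply]
    exact sum_attachFin_eq _ hlt (fun l => X l ω)
  have hmeasFin : ∀ l : Fin n, Measurable (Xf l) := fun l => hmeas l
  have hint : ∀ ν : ℝ, Integrable (fun ω => Real.exp (ν * S ω)) P := by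
    intro ν
    exact hind.integrable_exp_mul_sum hmeasFin (fun l _ => (hm l l.isLt ν).1)
  have hmgfS : ∀ ν : ℝ, mgf S P ν ≤ Real.exp (b * kR * ν^2) := by
    intro ν
    rw [hSdef, hind.mgf_sum hmeasFin T]
    calc ∏ l ∈ T, mgf (Xf l) P ν ≤ ∏ _l ∈ T, Real.exp (b * ν^2) := by
          apply Finset.prod_le_prod (fun l _ => mgf_nonneg)
          intro l _
          exact (hm l l.isLt ν).2
      _ = Real.exp (b * ν^2) ^ T.card := by rw [Finset.prod_const]
      _ = Real.exp ((T.card : ℝ) * (b * ν^2)) := by rw [Real.exp_nat_mul]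
      _ = Real.exp (b * kR * ν^2) := by rw [hcard]; ring_nf
  set ν₀ : ℝ := t / (2 * b * kR) with hν₀def
  have hν₀ : 0 ≤ ν₀ := by positivity
  have hexp : -ν₀ * t + b * kR * ν₀^2 = -(t^2) / (4 * b * kR) := by
    rw [hν₀def]
    field_simp
    ring
  have hup : (P {ω | t ≤ S ω}).toReal ≤ Real.exp (-(t^2) / (4 * b * kR)) := by
    calc (P {ω | t ≤ S ω}).toReal ≤ Real.exp (-ν₀ * t) * mgf S P ν₀ :=
          measure_ge_le_exp_mul_mgf t hν₀ (hint ν₀)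
      _ ≤ Real.exp (-ν₀ * t) * Real.exp (b * kR * ν₀^2) := by
          gcongr
          exact hmgfS ν₀
      _ = Real.exp (-ν₀ * t + b * kR * ν₀^2) := (Real.exp_add _ _).symm
      _ = Real.exp (-(t^2) / (4 * b * kR)) := by rw [hexp]
  have hintneg : Integrable (fun ω => Real.exp (ν₀ * (-S) ω)) P := by
    have := hint (-ν₀)
    simpa [neg_mul, mul_neg] using this
  have hdown : (P {ω | t ≤ (-S) ω}).toReal ≤ Real.exp (-(t^2) / (4 * b * kR)) := by
    calc (P {ω | t ≤ (-S) ω}).toReal ≤ Real.exp (-ν₀ * t) * mgf (-S) P ν₀ :=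
          measure_ge_le_exp_mul_mgf t hν₀ hintneg
      _ ≤ Real.exp (-ν₀ * t) * Real.exp (b * kR * ν₀^2) := by
          gcongr
          rw [mgf_neg]
          calc mgf S P (-ν₀) ≤ Real.exp (b * kR * (-ν₀)^2) := hmgfS (-ν₀)
            _ = Real.exp (b * kR * ν₀^2) := by ring_nf
      _ = Real.exp (-ν₀ * t + b * kR * ν₀^2) := (Real.exp_add _ _).symm
      _ = Real.exp (-(t^2) / (4 * b * kR)) := by rw [hexp]
  have hsub : {ω | t ≤ |∑ l ∈ Finset.Icc i j, X l ω|} ⊆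
      {ω | t ≤ S ω} ∪ {ω | t ≤ (-S) ω} := by
    intro ω hω
    simp only [Set.mem_setOf_eq] at hω
    rw [← hSeq ω] at hω
    rcases le_abs.mp hω with h | h
    · exact Or.inl h
    · exact Or.inr h
  set e : ℝ := Real.exp (-(t^2) / (4 * b * kR)) with hedef
  have he : 0 ≤ e := (Real.exp_pos _).le
  calc P {ω | t ≤ |∑ l ∈ Finset.Icc i j, X l ω|}
      ≤ P ({ω | t ≤ S ω} ∪ {ω | t ≤ (-S) ω}) := measure_mono hsub
    _ ≤ P {ω | t ≤ S ω} + P {ω | t ≤ (-S) ω} := measure_union_le _ _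
    _ ≤ ENNReal.ofReal e + ENNReal.ofReal e := by
        gcongr
        · exact (ENNReal.le_ofReal_iff_toReal_le (measure_ne_top P _) he).mpr hup
        · exact (ENNReal.le_ofReal_iff_toReal_le (measure_ne_top P _) he).mpr hdown
    _ = ENNReal.ofReal (2 * e) := by rw [← ENNReal.ofReal_add he he]; ring_nf
    _ = ENNReal.ofReal (2 * Real.exp (-(t^2) / (4 * b * kR))) := rfl

end SubgaussianHelpers

section Main

variable {Ω : Type*} [MeasurableSpace Ω] {P : Measure Ω}

lemma beta_nonneg_of_mgf [IsProbabilityMeasure P] (β : ℝ) (Z : Ω → ℝ)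
    (h : ∀ ν : ℝ, Integrable (fun ω => Real.exp (ν * Z ω)) P ∧
      ∫ ω, Real.exp (ν * Z ω) ∂P ≤ Real.exp (β * ν^2)) : 0 ≤ β := by
  have h1 := h 1
  have h2 := h (-1)
  have hsum : (2:ℝ) ≤ ∫ ω, (Real.exp (1 * Z ω) + Real.exp ((-1) * Z ω)) ∂P := by
    have hig : Integrable (fun ω => Real.exp (1 * Z ω) + Real.exp ((-1) * Z ω)) P :=
      h1.1.add h2.1
    have hle : ∀ ω, (2:ℝ) ≤ Real.exp (1 * Z ω) + Real.exp ((-1) * Z ω) := by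
      intro ω
      have a := Real.add_one_le_exp (1 * Z ω)
      have b := Real.add_one_le_exp ((-1) * Z ω)
      nlinarith
    calc (2:ℝ) = ∫ _ω, (2:ℝ) ∂P := by simp
      _ ≤ _ := integral_mono (integrable_const 2) hig hle
  rw [integral_add h1.1 h2.1] at hsum
  have hβ : (2:ℝ) ≤ 2 * Real.exp β := by
    have := h1.2
    have := h2.2
    simp only [one_pow, neg_one_sq, mul_one] at *
    linarith
  have : (1:ℝ) ≤ Real.exp β := by linarith
  by_contra hc
  push_neg at hc
  have := Real.exp_lt_one_iff.mpr hc
  linarith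

end Main

/-- **Lemma A.1.** Under Condition (A),
`limsup_{n→∞} C_n ≤ 12β` almost surely, where
`C_n = sup_{1≤i≤j≤n} (ξ_i+⋯+ξ_j)²/((j−i+1) log n)`. -/

theorem subgaussian_partial_sum_bound {Ω : Type*} [MeasurableSpace Ω]
    (P : Measure Ω) [IsProbabilityMeasure P]
    (β : ℝ) (ξ : ℕ → ℕ → Ω → ℝ) (hA : CondA P ξ β) :
    ∀ᵐ ω ∂P, ∀ ε : ℝ, 0 < ε → ∀ᶠ n : ℕ in atTop, Cn ξ n ω ≤ 12 * β + ε := by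
  obtain ⟨hmeas, hind, hmgf⟩ := hA
  have hβ : 0 ≤ β := beta_nonneg_of_mgf β (ξ 1 0) (hmgf 1 0 Nat.one_pos)
  have key : ∀ ε : ℝ, 0 < ε → ∀ᵐ ω ∂P, ∀ᶠ n : ℕ in atTop, Cn ξ n ω ≤ 12 * β + ε := by
    intro ε hε
    set b : ℝ := β + ε/24 with hbdef
    have hb : 0 < b := by rw [hbdef]; linarith
    set c : ℝ := ε / (8*b) with hcdef
    have hc : 0 < c := by rw [hcdef]; positivity
    set tf : ℕ → ℕ → ℕ → ℝ := fun n i j =>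
      Real.sqrt ((12*β+ε) * ((j:ℝ) - i + 1) * Real.log n) with htf
    set Bad : ℕ → Set Ω := fun n =>
      ⋃ p ∈ ((Finset.range n ×ˢ Finset.range n).filter fun p : ℕ × ℕ => p.1 ≤ p.2),
        {ω | tf n p.1 p.2 ≤ |∑ l ∈ Finset.Icc p.1 p.2, ξ n l ω|} with hBad
    have h4 : (12*β+ε) = (3+c)*(4*b) := by
      rw [hcdef, hbdef]
      field_simp
      ring
    have hBadBound : ∀ n : ℕ, P (Bad n) ≤ ENNReal.ofReal (2 * (n:ℝ) ^ (-(1+c))) := by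
      intro n
      rcases Nat.eq_zero_or_pos n with rfl | hn
      · simp [hBad]
      have hn0 : (0:ℝ) < n := by exact_mod_cast hn
      have hlogn : 0 ≤ Real.log n := Real.log_nonneg (by exact_mod_cast hn)
      have hpair : ∀ p ∈ ((Finset.range n ×ˢ Finset.range n).filter fun p : ℕ × ℕ => p.1 ≤ p.2),
          P {ω | tf n p.1 p.2 ≤ |∑ l ∈ Finset.Icc p.1 p.2, ξ n l ω|} ≤
            ENNReal.ofReal (2 * Real.exp (-((3+c) * Real.log n))) := by
        intro p hp
        simp only [Finset.mem_filter, Finset.mem_product, Finset.mem_range] at hp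
        obtain ⟨⟨hi, hj⟩, hij⟩ := hp
        have hch := chernoff_abs_sum n (ξ n) (hmeas n) (hind n) b hb
          (fun i hi ν => ⟨(hmgf n i hi ν).1, (hmgf n i hi ν).2.trans
            (Real.exp_le_exp.mpr (mul_le_mul_of_nonneg_right
              (by rw [hbdef]; linarith) (sq_nonneg ν)))⟩) p.1 p.2 hij hj (tf n p.1 p.2) (Real.sqrt_nonneg _)
        refine hch.trans (le_of_eq ?_)
        congr 2
        have hkpos : (0:ℝ) < (p.2:ℝ) - p.1 + 1 := by
          have : (p.1:ℝ) ≤ p.2 := by exact_mod_cast hij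
          linarith
        have ht2 : (tf n p.1 p.2)^2 = (12*β+ε) * ((p.2:ℝ) - p.1 + 1) * Real.log n := by
          rw [htf]
          exact Real.sq_sqrt (by
            apply mul_nonneg (mul_nonneg (by linarith) hkpos.le) hlogn)
        rw [ht2, h4]
        field_simp
      calc P (Bad n)
          ≤ ∑ p ∈ ((Finset.range n ×ˢ Finset.range n).filter fun p : ℕ × ℕ => p.1 ≤ p.2),
              P {ω | tf n p.1 p.2 ≤ |∑ l ∈ Finset.Icc p.1 p.2, ξ n l ω|} := by
            rw [hBad]
            exact measure_biUnion_finset_le _ _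
        _ ≤ ((Finset.range n ×ˢ Finset.range n).filter fun p : ℕ × ℕ => p.1 ≤ p.2).card •
              ENNReal.ofReal (2 * Real.exp (-((3+c) * Real.log n))) :=
            Finset.sum_le_card_nsmul _ _ _ hpair
        _ ≤ (n*n) • ENNReal.ofReal (2 * Real.exp (-((3+c) * Real.log n))) := by
            have hcard : ((Finset.range n ×ˢ Finset.range n).filter
                fun p : ℕ × ℕ => p.1 ≤ p.2).card ≤ n*n := by
              calc _ ≤ (Finset.range n ×ˢ Finset.range n).card := Finset.card_filter_le _ _
                _ = n*n := by rw [Finset.card_product, Finset.card_range]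
            simp only [nsmul_eq_mul]
            gcongr

        _ = ENNReal.ofReal (2 * (n:ℝ) ^ (-(1+c))) := by
            rw [nsmul_eq_mul, ← ENNReal.ofReal_natCast, ← ENNReal.ofReal_mul (by positivity)]
            congr 1
            have hexpn : Real.exp (-((3+c) * Real.log n)) = (n:ℝ) ^ (-(3+c)) := by
              rw [Real.rpow_def_of_pos hn0]
              congr 1
              ring
            have hpow : (n:ℝ)*(n:ℝ)*(n:ℝ)^(-(3+c)) = (n:ℝ)^(-(1+c)) := by
              rw [show (n:ℝ)*(n:ℝ) = (n:ℝ)^((2:ℕ):ℝ) from by rw [Real.rpow_natCast]; ring,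
                ← Real.rpow_add hn0]
              congr 1
              push_cast
              ring
            calc ((n*n : ℕ):ℝ) * (2 * Real.exp (-((3+c) * Real.log n)))
                = 2 * ((n:ℝ)*(n:ℝ)*(n:ℝ)^(-(3+c))) := by rw [hexpn]; push_cast; ring
              _ = 2 * (n:ℝ)^(-(1+c)) := by rw [hpow]
    have hsum : (∑' n, P (Bad n)) ≠ ⊤ := by
      have hsummable : Summable (fun n : ℕ => 2 * (n:ℝ) ^ (-(1+c))) :=
        (Real.summable_nat_rpow.mpr (by linarith)).mul_left 2
      have hle : (∑' n, P (Bad n)) ≤ ∑' n : ℕ, ENNReal.ofReal (2 * (n:ℝ) ^ (-(1+c))) :=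
        ENNReal.tsum_le_tsum hBadBound
      refine ne_top_of_le_ne_top ?_ hle
      rw [← ENNReal.ofReal_tsum_of_nonneg (fun n => by positivity) hsummable]
      exact ENNReal.ofReal_ne_top
    filter_upwards [MeasureTheory.ae_eventually_notMem hsum] with ω hω
    filter_upwards [hω, eventually_ge_atTop 2] with n hn hn2
    have hn0 : (0:ℝ) < n := by
      have : 0 < n := by omega
      exact_mod_cast this
    have hlog : 0 < Real.log n := Real.log_pos (by exact_mod_cast hn2)
    apply Real.sSup_le
    · rintro x ⟨i, j, hij, hjn, rfl⟩
      have hmem : (i,j) ∈ ((Finset.range n ×ˢ Finset.range n).filter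
          fun p : ℕ × ℕ => p.1 ≤ p.2) := by
        simp only [Finset.mem_filter, Finset.mem_product, Finset.mem_range]
        exact ⟨⟨by omega, hjn⟩, hij⟩
      have hnot : ¬ (tf n i j ≤ |∑ l ∈ Finset.Icc i j, ξ n l ω|) := by
        intro hcon
        apply hn
        rw [hBad]
        simp only [Set.mem_iUnion]
        exact ⟨(i,j), hmem, hcon⟩
      push_neg at hnot
      have hkpos : (0:ℝ) < (j:ℝ) - i + 1 := by
        have : (i:ℝ) ≤ j := by exact_mod_cast hij
        linarith
      have ht2 : (tf n i j)^2 = (12*β+ε) * ((j:ℝ) - i + 1) * Real.log n := by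
        rw [htf]
        exact Real.sq_sqrt (by
          apply mul_nonneg (mul_nonneg (by linarith) hkpos.le) hlog.le)
      have hS2 : (∑ l ∈ Finset.Icc i j, ξ n l ω)^2 ≤
          (12 * β + ε) * (((j:ℝ) - i + 1) * Real.log n) := by
        calc (∑ l ∈ Finset.Icc i j, ξ n l ω)^2
            = |∑ l ∈ Finset.Icc i j, ξ n l ω|^2 := (sq_abs _).symm
          _ ≤ (tf n i j)^2 := by
              apply pow_le_pow_left₀ (abs_nonneg _) hnot.le
          _ = (12 * β + ε) * (((j:ℝ) - i + 1) * Real.log n) := by rw [ht2]; ring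
      rw [div_le_iff₀ (by positivity)]
      exact hS2
    · linarith
  have H : ∀ᵐ ω ∂P, ∀ m : ℕ, ∀ᶠ n : ℕ in atTop, Cn ξ n ω ≤ 12*β + 1/((m:ℝ)+1) :=
    ae_all_iff.mpr fun m => key _ (by positivity)
  filter_upwards [H] with ω hω ε hε
  obtain ⟨m, hm⟩ := exists_nat_one_div_lt hε
  exact (hω m).mono fun n hn => hn.trans (by linarith)
end

section
/- Let n ∈ ℕ, γ > 0, y ∈ ℝⁿ, and let u ∈ ℝⁿ be a minimizer of v ↦ H_γ(v, y) = (1/n)·∑_{i=1}^n (v_i − y_i)² + γ·#{i : 1 ≤ i ≤ n−1, v_i ≠ v_{i+1}}. Let I and I' be two adjacent maximal blocks of consecutive indices on each of which u is constant (i.e. I ∪ I' is a set of consecutive indices, u is constant on I and on I', and u takes different values on I and I'). Then γ ≤ (ℓ(I)·ℓ(I')/(ℓ(I) + ℓ(I')))·(μ_I(y) − μ_{I'}(y))², where ℓ(I) = #I/n and μ_I(y) = (1/#I)·∑_{i∈I} y_i. -/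
open MeasureTheory Filter Set ProbabilityTheory
open scoped Classical ENNReal NNReal

lemma dJ_mono' (n : ℕ) (u v : ℕ → ℝ)
    (h : ∀ i, i + 1 < n → v i ≠ v (i+1) → u i ≠ u (i+1)) : dJ n v ≤ dJ n u := by
  have hfin : {i | i + 1 < n ∧ u i ≠ u (i+1)}.Finite :=
    (Set.finite_Iio n).subset fun i hi => Nat.lt_of_succ_lt hi.1
  exact Set.ncard_le_ncard (fun i hi => ⟨hi.1, h i hi.1 hi.2⟩) hfin

lemma dJ_lt' (n : ℕ) (u v : ℕ → ℝ) (j : ℕ) (hj : j + 1 < n)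
    (hju : u j ≠ u (j+1)) (hjv : v j = v (j+1))
    (h : ∀ i, i + 1 < n → v i ≠ v (i+1) → u i ≠ u (i+1)) :
    dJ n v + 1 ≤ dJ n u := by
  have hfinU : {i | i + 1 < n ∧ u i ≠ u (i+1)}.Finite :=
    (Set.finite_Iio n).subset fun i hi => Nat.lt_of_succ_lt hi.1
  have hfinV : {i | i + 1 < n ∧ v i ≠ v (i+1)}.Finite :=
    (Set.finite_Iio n).subset fun i hi => Nat.lt_of_succ_lt hi.1
  have hsub : insert j {i | i + 1 < n ∧ v i ≠ v (i+1)} ⊆ {i | i + 1 < n ∧ u i ≠ u (i+1)} := by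
    intro i hi
    rcases hi with rfl | hi
    · exact ⟨hj, hju⟩
    · exact ⟨hi.1, h i hi.1 hi.2⟩
  have hnotmem : j ∉ {i | i + 1 < n ∧ v i ≠ v (i+1)} := fun hmem => hmem.2 hjv
  have hle := Set.ncard_le_ncard hsub hfinU
  rw [Set.ncard_insert_of_notMem hnotmem hfinV] at hle
  exact hle

lemma sum_patch' (n a b : ℕ) (hb : b ≤ n) (u y : ℕ → ℝ) (t : ℝ) :
    ∑ i ∈ Finset.range n, ((if a ≤ i ∧ i < b then t else u i) - y i)^2
      = ∑ i ∈ Finset.range n, (u i - y i)^2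
        + ∑ i ∈ Finset.Ico a b, ((t - y i)^2 - (u i - y i)^2) := by
  have hsub : Finset.Ico a b ⊆ Finset.range n := by
    intro i hi
    rw [Finset.mem_range]
    exact lt_of_lt_of_le (Finset.mem_Ico.1 hi).2 hb
  have key : ∑ i ∈ Finset.Ico a b,
      (((if a ≤ i ∧ i < b then t else u i) - y i)^2 - (u i - y i)^2)
      = ∑ i ∈ Finset.range n,
      (((if a ≤ i ∧ i < b then t else u i) - y i)^2 - (u i - y i)^2) := by
    apply Finset.sum_subset hsub
    intro i _ hi
    rw [Finset.mem_Ico] at hi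
    rw [if_neg hi]
    ring
  have key2 : ∑ i ∈ Finset.Ico a b, ((t - y i)^2 - (u i - y i)^2)
      = ∑ i ∈ Finset.Ico a b,
        (((if a ≤ i ∧ i < b then t else u i) - y i)^2 - (u i - y i)^2) := by
    apply Finset.sum_congr rfl
    intro i hi
    rw [Finset.mem_Ico] at hi
    rw [if_pos hi]
  rw [key2, key, Finset.sum_sub_distrib]
  ring

lemma block_sum' (a b : ℕ) (y : ℕ → ℝ) (t α : ℝ) :
    ∑ i ∈ Finset.Ico a b, ((t - y i)^2 - (α - y i)^2)
      = ((b - a : ℕ) : ℝ) * (t^2 - α^2) - 2*(t-α) * ∑ i ∈ Finset.Ico a b, y i := by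
  have h : ∀ i ∈ Finset.Ico a b, (t - y i)^2 - (α - y i)^2
      = (t^2 - α^2) - (2*(t-α)) * y i := fun i _ => by ring
  rw [Finset.sum_congr rfl h, Finset.sum_sub_distrib, Finset.sum_const, ← Finset.mul_sum,
    Nat.card_Ico, nsmul_eq_mul]

set_option maxHeartbeats 1000000 in
/-- **Lemma A.3(i).** If `u` minimizes the discrete Potts functional and
`I = [a,b)`, `I' = [b,c)` are adjacent maximal constancy blocks of `u` (0-indexed), then
`γ ≤ (ℓ(I)ℓ(I')/(ℓ(I)+ℓ(I'))) (μ_I(y) − μ_{I'}(y))²`. -/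
theorem potts_min_adjacent_blocks (n : ℕ) (γ : ℝ) (hγ : 0 < γ) (y u : ℕ → ℝ)
    (hmin : ∀ v : ℕ → ℝ, Hd n γ u y ≤ Hd n γ v y)
    (a b c : ℕ) (hab : a < b) (hbc : b < c) (hcn : c ≤ n)
    (hI : ∀ i, a ≤ i → i < b → u i = u a)
    (hI' : ∀ i, b ≤ i → i < c → u i = u b)
    (hne : u a ≠ u b)
    (hmaxl : a = 0 ∨ u (a - 1) ≠ u a)
    (hmaxr : c = n ∨ u c ≠ u (c - 1)) :
    γ ≤ ((((b - a : ℕ) : ℝ) / n) * (((c - b : ℕ) : ℝ) / n) /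
          ((((b - a : ℕ) : ℝ) / n) + (((c - b : ℕ) : ℝ) / n))) *
        ((1 / ((b - a : ℕ) : ℝ)) * ∑ i ∈ Finset.Ico a b, y i -
         (1 / ((c - b : ℕ) : ℝ)) * ∑ i ∈ Finset.Ico b c, y i) ^ 2 := by
  have hbn : b < n := lt_of_lt_of_le hbc hcn
  have hn : 0 < n := lt_of_le_of_lt (Nat.zero_le b) hbn
  set P : ℝ := ((b - a : ℕ) : ℝ) with hPdef
  set Q : ℝ := ((c - b : ℕ) : ℝ) with hQdef
  set S1 : ℝ := ∑ i ∈ Finset.Ico a b, y i with hS1def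
  set S2 : ℝ := ∑ i ∈ Finset.Ico b c, y i with hS2def
  have hP : (0:ℝ) < P := by rw [hPdef]; exact_mod_cast Nat.sub_pos_of_lt hab
  have hQ : (0:ℝ) < Q := by rw [hQdef]; exact_mod_cast Nat.sub_pos_of_lt hbc
  have hn' : (0:ℝ) < (n:ℝ) := by exact_mod_cast hn
  -- Step A : u a = S1 / P
  have stepA : u a = S1 / P := by
    set t : ℝ := S1 / P with htdef
    set v : ℕ → ℝ := fun i => if a ≤ i ∧ i < b then t else u i with hv
    have hjump : ∀ i, i + 1 < n → v i ≠ v (i+1) → u i ≠ u (i+1) := by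
      intro i hi hvne
      by_cases h1 : a ≤ i ∧ i < b <;> by_cases h2 : a ≤ i + 1 ∧ i + 1 < b
      · exact absurd (by simp only [hv, if_pos h1, if_pos h2]) hvne
      · have e : i + 1 = b := by omega
        rw [e, hI i h1.1 h1.2]
        exact hne
      · rcases hmaxl with h0 | h0
        · omega
        · have e2 : i + 1 = a := by omega
          have e1 : i = a - 1 := by omega
          rw [e2, e1]
          exact h0
      · simpa only [hv, if_neg h1, if_neg h2] using hvne
    have hdj : dJ n v ≤ dJ n u := dJ_mono' n u v hjump
    have hsum : ∑ i ∈ Finset.range n, (v i - y i)^2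
        = ∑ i ∈ Finset.range n, (u i - y i)^2
          + ∑ i ∈ Finset.Ico a b, ((t - y i)^2 - (u i - y i)^2) := by
      simp only [hv]
      exact sum_patch' n a b (by omega) u y t
    have hcongr : ∑ i ∈ Finset.Ico a b, ((t - y i)^2 - (u i - y i)^2)
        = ∑ i ∈ Finset.Ico a b, ((t - y i)^2 - (u a - y i)^2) := by
      refine Finset.sum_congr rfl fun i hi => ?_
      rw [Finset.mem_Ico] at hi
      rw [hI i hi.1 hi.2]
    have hmin' := hmin v
    simp only [Hd] at hmin'
    rw [hsum, hcongr, block_sum' a b y t (u a), mul_add] at hmin'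
    have hγdj : γ * (dJ n v : ℝ) ≤ γ * (dJ n u : ℝ) :=
      mul_le_mul_of_nonneg_left (by exact_mod_cast hdj) hγ.le
    have hX : 0 ≤ (1/(n:ℝ)) * (P * (t^2 - (u a)^2) - 2*(t - u a) * S1) := by
      linarith
    have hX2 : 0 ≤ P * (t^2 - (u a)^2) - 2*(t - u a) * S1 := by
      by_contra hneg
      push_neg at hneg
      have : (1/(n:ℝ)) * (P * (t^2 - (u a)^2) - 2*(t - u a) * S1) < 0 :=
        mul_neg_of_pos_of_neg (by positivity) hneg
      linarith
    have hS1P : S1 = t * P := by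
      rw [htdef]
      field_simp
    have hident : P * (u a - t)^2 = -(P * (t^2 - (u a)^2) - 2*(t - u a) * S1) := by
      rw [hS1P]; ring
    have hsq : (u a - t)^2 = 0 := by
      have h1 : P * (u a - t)^2 ≤ 0 := by linarith
      have h2 : 0 ≤ (u a - t)^2 := sq_nonneg _
      nlinarith
    have : u a - t = 0 := by
      exact sq_eq_zero_iff.mp hsq
    linarith
  -- Step B : u b = S2 / Q
  have stepB : u b = S2 / Q := by
    set t : ℝ := S2 / Q with htdef
    set v : ℕ → ℝ := fun i => if b ≤ i ∧ i < c then t else u i with hv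
    have hjump : ∀ i, i + 1 < n → v i ≠ v (i+1) → u i ≠ u (i+1) := by
      intro i hi hvne
      by_cases h1 : b ≤ i ∧ i < c <;> by_cases h2 : b ≤ i + 1 ∧ i + 1 < c
      · exact absurd (by simp only [hv, if_pos h1, if_pos h2]) hvne
      · have e : i + 1 = c := by omega
        rcases hmaxr with h0 | h0
        · omega
        · have e1 : i = c - 1 := by omega
          rw [e, e1]
          exact Ne.symm h0
      · have e : i + 1 = b := by omega
        rw [e, hI i (by omega) (by omega)]
        exact hne
      · simpa only [hv, if_neg h1, if_neg h2] using hvne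
    have hdj : dJ n v ≤ dJ n u := dJ_mono' n u v hjump
    have hsum : ∑ i ∈ Finset.range n, (v i - y i)^2
        = ∑ i ∈ Finset.range n, (u i - y i)^2
          + ∑ i ∈ Finset.Ico b c, ((t - y i)^2 - (u i - y i)^2) := by
      simp only [hv]
      exact sum_patch' n b c (by omega) u y t
    have hcongr : ∑ i ∈ Finset.Ico b c, ((t - y i)^2 - (u i - y i)^2)
        = ∑ i ∈ Finset.Ico b c, ((t - y i)^2 - (u b - y i)^2) := by
      refine Finset.sum_congr rfl fun i hi => ?_
      rw [Finset.mem_Ico] at hi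
      rw [hI' i hi.1 hi.2]
    have hmin' := hmin v
    simp only [Hd] at hmin'
    rw [hsum, hcongr, block_sum' b c y t (u b), mul_add] at hmin'
    have hγdj : γ * (dJ n v : ℝ) ≤ γ * (dJ n u : ℝ) :=
      mul_le_mul_of_nonneg_left (by exact_mod_cast hdj) hγ.le
    have hX : 0 ≤ (1/(n:ℝ)) * (Q * (t^2 - (u b)^2) - 2*(t - u b) * S2) := by
      linarith
    have hX2 : 0 ≤ Q * (t^2 - (u b)^2) - 2*(t - u b) * S2 := by
      by_contra hneg
      push_neg at hneg
      have : (1/(n:ℝ)) * (Q * (t^2 - (u b)^2) - 2*(t - u b) * S2) < 0 :=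
        mul_neg_of_pos_of_neg (by positivity) hneg
      linarith
    have hS2Q : S2 = t * Q := by
      rw [htdef]
      field_simp
    have hident : Q * (u b - t)^2 = -(Q * (t^2 - (u b)^2) - 2*(t - u b) * S2) := by
      rw [hS2Q]; ring
    have hsq : (u b - t)^2 = 0 := by
      have h1 : Q * (u b - t)^2 ≤ 0 := by linarith
      have h2 : 0 ≤ (u b - t)^2 := sq_nonneg _
      nlinarith
    have : u b - t = 0 := by
      exact sq_eq_zero_iff.mp hsq
    linarith
  -- Step C : merge the two blocks
  set m : ℝ := (S1 + S2) / (P + Q) with hmdef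
  set v : ℕ → ℝ := fun i => if a ≤ i ∧ i < c then m else u i with hv
  have hjump : ∀ i, i + 1 < n → v i ≠ v (i+1) → u i ≠ u (i+1) := by
    intro i hi hvne
    by_cases h1 : a ≤ i ∧ i < c <;> by_cases h2 : a ≤ i + 1 ∧ i + 1 < c
    · exact absurd (by simp only [hv, if_pos h1, if_pos h2]) hvne
    · have e : i + 1 = c := by omega
      rcases hmaxr with h0 | h0
      · omega
      · have e1 : i = c - 1 := by omega
        rw [e, e1]
        exact Ne.symm h0
    · rcases hmaxl with h0 | h0
      · omega
      · have e2 : i + 1 = a := by omega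
        have e1 : i = a - 1 := by omega
        rw [e2, e1]
        exact h0
    · simpa only [hv, if_neg h1, if_neg h2] using hvne
  have hjv : v (b-1) = v ((b-1)+1) := by
    simp only [hv]
    rw [if_pos (show a ≤ b-1 ∧ b-1 < c by omega),
      if_pos (show a ≤ b-1+1 ∧ b-1+1 < c by omega)]
  have hju : u (b-1) ≠ u ((b-1)+1) := by
    have e : b - 1 + 1 = b := by omega
    rw [e, hI (b-1) (by omega) (by omega)]
    exact hne
  have hdj : dJ n v + 1 ≤ dJ n u := dJ_lt' n u v (b-1) (by omega) hju hjv hjump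
  have hsum : ∑ i ∈ Finset.range n, (v i - y i)^2
      = ∑ i ∈ Finset.range n, (u i - y i)^2
        + ∑ i ∈ Finset.Ico a c, ((m - y i)^2 - (u i - y i)^2) := by
    simp only [hv]
    exact sum_patch' n a c hcn u y m
  have hsplit : ∑ i ∈ Finset.Ico a c, ((m - y i)^2 - (u i - y i)^2)
      = (∑ i ∈ Finset.Ico a b, ((m - y i)^2 - (u a - y i)^2))
        + ∑ i ∈ Finset.Ico b c, ((m - y i)^2 - (u b - y i)^2) := by
    rw [← Finset.sum_Ico_consecutive (fun i => (m - y i)^2 - (u i - y i)^2)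
      (le_of_lt hab) (le_of_lt hbc)]
    congr 1
    · refine Finset.sum_congr rfl fun i hi => ?_
      rw [Finset.mem_Ico] at hi
      rw [hI i hi.1 hi.2]
    · refine Finset.sum_congr rfl fun i hi => ?_
      rw [Finset.mem_Ico] at hi
      rw [hI' i hi.1 hi.2]
  have hmin' := hmin v
  simp only [Hd] at hmin'
  rw [hsum, hsplit, block_sum' a b y m (u a), block_sum' b c y m (u b), mul_add] at hmin'
  have hγdj : γ * ((dJ n v : ℝ) + 1) ≤ γ * (dJ n u : ℝ) :=
    mul_le_mul_of_nonneg_left (by exact_mod_cast hdj) hγ.le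
  have hγle : γ ≤ (1/(n:ℝ)) *
      ((P * (m^2 - (u a)^2) - 2*(m - u a) * S1)
        + (Q * (m^2 - (u b)^2) - 2*(m - u b) * S2)) := by
    rw [mul_add, mul_one] at hγdj
    linarith
  rw [stepA, stepB] at hγle
  have heq : (P / (n:ℝ) * (Q / (n:ℝ)) / (P / (n:ℝ) + Q / (n:ℝ))) *
      ((1 / P) * S1 - (1 / Q) * S2) ^ 2
      = (1/(n:ℝ)) *
        ((P * (m^2 - (S1/P)^2) - 2*(m - S1/P) * S1)
          + (Q * (m^2 - (S2/Q)^2) - 2*(m - S2/Q) * S2)) := by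
    rw [hmdef]
    have hPQ : P + Q ≠ 0 := by positivity
    field_simp
    ring
  rw [heq]
  exact hγle
end
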